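/- arXiv:2401.11251 — 2 statements merged into one kernel-verified Lean document; each statement's English description precedes it below -/
import Mathlib

section
/- Let 𝓜=(M^{(λ)})_{λ>0} and 𝓝=(N^{(λ)})_{λ>0} be weight matrices. If 𝓜(⪯)𝓝, then S_{(𝓜)}(ℝ^d) ⊆ S_{(𝓝)}(ℝ^d) with continuous inclusion for every dimension d∈ℕ, where continuity means: for all λ,h>0 there exist κ,h'>0 and C≥1 with ‖f‖_{∞,N^{(λ)},h} ≤ C·‖f‖_{∞,M^{(κ)},h'} for every f∈S_{(𝓜)}(ℝ^d). Conversely, if 𝓜 and 𝓝 are standard log-convex, both satisfy conditions (12L2B) and (M2')_B, and S_{(𝓜)}(ℝ) ⊆ S_{(𝓝)}(ℝ) holds with continuous inclusion (dimension d=1), then 𝓜(⪯)𝓝. -/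
open Filter Asymptotics

noncomputable section

/-- Partial derivative operator in coordinate `i`. -/
def pderivOp {d : ℕ} (i : Fin d) (f : (Fin d → ℝ) → ℝ) : (Fin d → ℝ) → ℝ :=
  fun x => fderiv ℝ f x (Pi.single i 1)

/-- Iterated partial derivative `∂^β f` for a multi-index `β`. -/
def mderiv {d : ℕ} (β : Fin d → ℕ) (f : (Fin d → ℝ) → ℝ) : (Fin d → ℝ) → ℝ :=
  (List.finRange d).foldr (fun i g => (pderivOp i)^[β i] g) f

/-- The monomial `x^α` for a multi-index `α`. -/
def mpow {d : ℕ} (x : Fin d → ℝ) (α : Fin d → ℕ) : ℝ := ∏ i, x i ^ α i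

/-- The length `|α| = α 0 + ⋯ + α (d-1)` of a multi-index. -/
def msize {d : ℕ} (α : Fin d → ℕ) : ℕ := ∑ i, α i

/-- Young conjugate `φ*_ω(s) = sup_{t ≥ 0} (s·t − ω(e^t))`. -/
def youngConj (ω : ℝ → ℝ) (s : ℝ) : ℝ :=
  sSup {y : ℝ | ∃ t : ℝ, 0 ≤ t ∧ y = s * t - ω (Real.exp t)}

/-- A general weight function: continuous, increasing, `ω:[0,∞)→[0,∞)`, with
conditions (α), (γ), (δ) (condition (β) is not required). -/
structure IsGenWeightFun (ω : ℝ → ℝ) : Prop where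
  nonneg : ∀ t, 0 ≤ t → 0 ≤ ω t
  continuous : ContinuousOn ω (Set.Ici 0)
  mono : MonotoneOn ω (Set.Ici 0)
  alpha : ∃ L : ℝ, 1 ≤ L ∧ ∀ t, 0 ≤ t → ω (2 * t) ≤ L * (ω t + 1)
  gamma : Real.log =o[Filter.atTop] ω
  delta : ConvexOn ℝ (Set.Ici 0) fun t => ω (Real.exp t)

/-- A weight function: a general weight function which moreover satisfies
(β): `ω(t) = O(t²)` as `t → ∞`. -/
structure IsWeightFun (ω : ℝ → ℝ) extends IsGenWeightFun ω : Prop where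
  beta : ω =O[Filter.atTop] fun t : ℝ => t ^ 2

/-- The weight `exp((1/l)·φ*_ω(l·k))`. -/
def wWeight (ω : ℝ → ℝ) (l : ℝ) (k : ℕ) : ℝ :=
  Real.exp (1 / l * youngConj ω (l * (k : ℝ)))

/-- Roumieu Gelfand–Shilov class `S_{{ω}}(ℝ^d)`. -/
def SRoumieuW (ω : ℝ → ℝ) (d : ℕ) : Set ((Fin d → ℝ) → ℝ) :=
  {f | ContDiff ℝ (⊤ : ℕ∞) f ∧ ∃ l > 0, ∃ C > 0, ∀ α β : Fin d → ℕ, ∀ x : Fin d → ℝ,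
    |mpow x α * mderiv β f x| ≤ C * wWeight ω l (msize α + msize β)}

/-- Beurling Gelfand–Shilov class `S_{(ω)}(ℝ^d)`. -/
def SBeurlingW (ω : ℝ → ℝ) (d : ℕ) : Set ((Fin d → ℝ) → ℝ) :=
  {f | ContDiff ℝ (⊤ : ℕ∞) f ∧ ∀ l > 0, ∃ C > 0, ∀ α β : Fin d → ℕ, ∀ x : Fin d → ℝ,
    |mpow x α * mderiv β f x| ≤ C * wWeight ω l (msize α + msize β)}

/-- Continuity of the inclusion `S_(ω)(ℝ^d) ⊆ S_(σ)(ℝ^d)`: for every `μ > 0` there are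
`ν > 0` and `C ≥ 1` with `q_{σ,μ}(f) ≤ C · q_{ω,ν}(f)` for all `f ∈ S_(ω)(ℝ^d)`,
expressed via bounding constants. -/
def contIncBW (ω σ : ℝ → ℝ) (d : ℕ) : Prop :=
  ∀ μ > 0, ∃ ν > 0, ∃ C : ℝ, 1 ≤ C ∧ ∀ f ∈ SBeurlingW ω d, ∀ D : ℝ, 0 ≤ D →
    (∀ α β : Fin d → ℕ, ∀ x : Fin d → ℝ,
      |mpow x α * mderiv β f x| ≤ D * wWeight ω ν (msize α + msize β)) →
    (∀ α β : Fin d → ℕ, ∀ x : Fin d → ℝ,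
      |mpow x α * mderiv β f x| ≤ C * D * wWeight σ μ (msize α + msize β))

/-- `M ∈ LC`: normalized, log-convex, with `M_p^{1/p} → ∞`. -/
structure IsLC (M : ℕ → ℝ) : Prop where
  pos : ∀ p, 0 < M p
  norm0 : M 0 = 1
  norm1 : 1 ≤ M 1
  logConvex : ∀ p : ℕ, M (p + 1) ^ 2 ≤ M p * M (p + 2)
  root_tendsto : Filter.Tendsto (fun p : ℕ => M p ^ (1 / (p : ℝ))) Filter.atTop Filter.atTop

/-- `M ⪯ N`: `∃ C ≥ 1, ∀ p, M_p ≤ C^p N_p`. -/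
def seqPreceq (M N : ℕ → ℝ) : Prop := ∃ C : ℝ, 1 ≤ C ∧ ∀ p : ℕ, M p ≤ C ^ p * N p

/-- `M ◁ N`: `(M_p/N_p)^{1/p} → 0`. -/
def seqLtriangle (M N : ℕ → ℝ) : Prop :=
  Filter.Tendsto (fun p : ℕ => (M p / N p) ^ (1 / (p : ℝ))) Filter.atTop (nhds 0)

/-- `‖f‖_{∞,M,h} ≤ C`, expressed pointwise. -/
def seqBound {d : ℕ} (M : ℕ → ℝ) (h C : ℝ) (f : (Fin d → ℝ) → ℝ) : Prop :=
  ∀ α β : Fin d → ℕ, ∀ x : Fin d → ℝ,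
    |mpow x α * mderiv β f x| ≤ C * h ^ (msize α + msize β) * M (msize α + msize β)

/-- Roumieu class `S_{{M}}(ℝ^d)` for a single weight sequence. -/
def SRoumieuSeq (M : ℕ → ℝ) (d : ℕ) : Set ((Fin d → ℝ) → ℝ) :=
  {f | ContDiff ℝ (⊤ : ℕ∞) f ∧ ∃ C > 0, ∃ h > 0, seqBound M h C f}

/-- Beurling class `S_(M)(ℝ^d)` for a single weight sequence. -/
def SBeurlingSeq (M : ℕ → ℝ) (d : ℕ) : Set ((Fin d → ℝ) → ℝ) :=
  {f | ContDiff ℝ (⊤ : ℕ∞) f ∧ ∀ h > 0, ∃ C > 0, seqBound M h C f}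

/-- Moderate growth (M2). -/
def condM2 (M : ℕ → ℝ) : Prop := ∃ C : ℝ, 1 ≤ C ∧ ∀ p q : ℕ, M (p + q) ≤ C ^ (p + q) * M p * M q

/-- Derivation closedness (M2'). -/
def condM2' (M : ℕ → ℝ) : Prop := ∃ D : ℝ, 1 ≤ D ∧ ∀ p : ℕ, M (p + 1) ≤ D ^ (p + 1) * M p

/-- Condition (12L2R) for a single sequence. -/
def cond12L2Rseq (M : ℕ → ℝ) : Prop :=
  ∃ B > 0, ∃ C > 0, ∃ H > 0, ∀ p q : ℕ,
    (p : ℝ) ^ ((p : ℝ) / 2) * M q ≤ B * C ^ p * H ^ (p + q) * M (p + q)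

/-- Condition (12L2B) for a single sequence. -/
def cond12L2Bseq (M : ℕ → ℝ) : Prop :=
  ∃ H > 0, ∀ C > 0, ∃ B > 0, ∀ p q : ℕ,
    (p : ℝ) ^ ((p : ℝ) / 2) * M q ≤ B * C ^ p * H ^ (p + q) * M (p + q)

/-- Non-quasianalyticity of a weight sequence: `∑ M_{p-1}/M_p < ∞`. -/
def nonQA (M : ℕ → ℝ) : Prop := Summable fun p : ℕ => M p / M (p + 1)

/-- Continuity of the inclusion `S_(M)(ℝ^d) ⊆ S_(N)(ℝ^d)` for single sequences. -/
def contIncBSeq (M N : ℕ → ℝ) (d : ℕ) : Prop :=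
  ∀ h > 0, ∃ h' > 0, ∃ C : ℝ, 1 ≤ C ∧ ∀ f ∈ SBeurlingSeq M d, ∀ D : ℝ, 0 ≤ D →
    seqBound M h' D f → seqBound N h (C * D) f

/-- A weight matrix: positive normalized sequences, pointwise nondecreasing in the index. -/
def IsWeightMatrix (M : ℝ → ℕ → ℝ) : Prop :=
  (∀ l, 0 < l → (∀ p, 0 < M l p) ∧ M l 0 = 1) ∧
    ∀ l k, 0 < l → l ≤ k → ∀ p, M l p ≤ M k p

/-- Standard log-convexity of a weight matrix. -/
def StdLogConvex (M : ℝ → ℕ → ℝ) : Prop := ∀ l, 0 < l → IsLC (M l)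

/-- Roumieu class `S_{{𝓜}}(ℝ^d)` for a weight matrix. -/
def SRoumieuMat (M : ℝ → ℕ → ℝ) (d : ℕ) : Set ((Fin d → ℝ) → ℝ) :=
  {f | ∃ l > 0, f ∈ SRoumieuSeq (M l) d}

/-- Beurling class `S_(𝓜)(ℝ^d)` for a weight matrix. -/
def SBeurlingMat (M : ℝ → ℕ → ℝ) (d : ℕ) : Set ((Fin d → ℝ) → ℝ) :=
  {f | ∀ l > 0, f ∈ SBeurlingSeq (M l) d}

/-- `𝓜{⪯}𝓝`. -/
def matPreceqR (M N : ℝ → ℕ → ℝ) : Prop := ∀ l > 0, ∃ k > 0, seqPreceq (M l) (N k)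

/-- `𝓜(⪯)𝓝`. -/
def matPreceqB (M N : ℝ → ℕ → ℝ) : Prop := ∀ l > 0, ∃ k > 0, seqPreceq (M k) (N l)

/-- `𝓜 ◁ 𝓝`. -/
def matLtriangle (M N : ℝ → ℕ → ℝ) : Prop := ∀ l > 0, ∀ k > 0, seqLtriangle (M l) (N k)

/-- Condition (12L2R) for a weight matrix (Roumieu). -/
def cond12L2RMat (M : ℝ → ℕ → ℝ) : Prop :=
  ∀ l > 0, ∃ k, l ≤ k ∧ ∃ B > 0, ∃ C > 0, ∃ H > 0, ∀ p q : ℕ,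
    (p : ℝ) ^ ((p : ℝ) / 2) * M l q ≤ B * C ^ p * H ^ (p + q) * M k (p + q)

/-- Condition (M2')_R for a weight matrix (Roumieu). -/
def condM2'RMat (M : ℝ → ℕ → ℝ) : Prop :=
  ∀ l > 0, ∃ k, l ≤ k ∧ ∃ A : ℝ, 1 ≤ A ∧ ∀ p : ℕ, M l (p + 1) ≤ A ^ (p + 1) * M k p

/-- Condition (12L2B) for a weight matrix (Beurling). -/
def cond12L2BMat (M : ℝ → ℕ → ℝ) : Prop :=
  ∀ l > 0, ∃ k, 0 < k ∧ k ≤ l ∧ ∃ H > 0, ∀ C > 0, ∃ B > 0, ∀ p q : ℕ,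
    (p : ℝ) ^ ((p : ℝ) / 2) * M k q ≤ B * C ^ p * H ^ (p + q) * M l (p + q)

/-- Condition (M2')_B for a weight matrix (Beurling). -/
def condM2'BMat (M : ℝ → ℕ → ℝ) : Prop :=
  ∀ l > 0, ∃ k, 0 < k ∧ k ≤ l ∧ ∃ A : ℝ, 1 ≤ A ∧ ∀ p : ℕ, M k (p + 1) ≤ A ^ (p + 1) * M l p

/-- Continuity of the inclusion `S_(𝓜)(ℝ^d) ⊆ S_(𝓝)(ℝ^d)` for weight matrices. -/
def contIncBMat (M N : ℝ → ℕ → ℝ) (d : ℕ) : Prop :=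
  ∀ l > 0, ∀ h > 0, ∃ k > 0, ∃ h' > 0, ∃ C : ℝ, 1 ≤ C ∧
    ∀ f ∈ SBeurlingMat M d, ∀ D : ℝ, 0 ≤ D →
      seqBound (M k) h' D f → seqBound (N l) h (C * D) f

/-- Associated function `ω_M(t) = sup_p log(t^p / M_p)`. -/
def assocFun (M : ℕ → ℝ) (t : ℝ) : ℝ :=
  sSup {y : ℝ | ∃ p : ℕ, y = Real.log (t ^ p / M p)}

/-- Condition (α) for a function. -/
def condAlpha (ω : ℝ → ℝ) : Prop := ∃ L : ℝ, 1 ≤ L ∧ ∀ t, 0 ≤ t → ω (2 * t) ≤ L * (ω t + 1)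

/-- Condition (ω6): `∃ H ≥ 1, ∀ t ≥ 0, 2ω(t) ≤ ω(Ht) + H`. -/
def condOmega6 (ω : ℝ → ℝ) : Prop := ∃ H : ℝ, 1 ≤ H ∧ ∀ t, 0 ≤ t → 2 * ω t ≤ ω (H * t) + H

/-- The sequence `W^{(λ)}_p = exp((1/λ)φ*_ω(λ p))`. -/
def wSeq (ω : ℝ → ℝ) (l : ℝ) (p : ℕ) : ℝ := Real.exp (1 / l * youngConj ω (l * (p : ℝ)))

end

noncomputable section AuxGS
open Polynomial Complex

open Polynomial Complex

/-- coefficientwise nonneg -/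
def cnn (P : Polynomial ℝ) : Prop := ∀ k, 0 ≤ P.coeff k
/-- coefficientwise le -/
def cle (P Q : Polynomial ℝ) : Prop := ∀ k, P.coeff k ≤ Q.coeff k

lemma cnn_mul {P Q : Polynomial ℝ} (hP : cnn P) (hQ : cnn Q) : cnn (P * Q) := by
  intro k
  rw [Polynomial.coeff_mul]
  exact Finset.sum_nonneg fun x _ => mul_nonneg (hP x.1) (hQ x.2)

lemma cle_mul {P P' Q Q' : Polynomial ℝ} (hP : cnn P) (hQ : cnn Q)
    (h1 : cle P P') (h2 : cle Q Q') : cle (P * Q) (P' * Q') := by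
  intro k
  rw [Polynomial.coeff_mul, Polynomial.coeff_mul]
  refine Finset.sum_le_sum fun x _ => ?_
  exact mul_le_mul (h1 x.1) (h2 x.2) (hQ x.2) (le_trans (hP x.1) (h1 x.1))

lemma cnn_pow {P : Polynomial ℝ} (hP : cnn P) (n : ℕ) : cnn (P ^ n) := by
  induction n with
  | zero => intro k; simp [Polynomial.coeff_one]; positivity
  | succ n ih => rw [pow_succ]; exact cnn_mul ih hP

lemma cle_pow {P Q : Polynomial ℝ} (hP : cnn P) (h : cle P Q) (n : ℕ) :
    cle (P ^ n) (Q ^ n) := by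
  induction n with
  | zero => intro k; simp
  | succ n ih => rw [pow_succ, pow_succ]; exact cle_mul (cnn_pow hP n) hP ih h

/-- the dominating linear polynomial -/
def Qlin (c : ℝ) : Polynomial ℝ := Polynomial.C c + 2 * X

lemma Qlin_coeff (c : ℝ) : ∀ k, (Qlin c).coeff k = if k = 0 then c else if k = 1 then 2 else 0 := by
  intro k
  simp only [Qlin, Polynomial.coeff_add]
  match k with
  | 0 => simp
  | 1 => simp [Polynomial.coeff_C]
  | (m+2) => simp [Polynomial.coeff_C, Polynomial.coeff_X, mul_comm]

lemma cnn_Qlin {c : ℝ} (hc : 0 ≤ c) : cnn (Qlin c) := by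
  intro k; rw [Qlin_coeff]; split
  · exact hc
  · split <;> norm_num
lemma cle_Qlin {c c' : ℝ} (h : c ≤ c') : cle (Qlin c) (Qlin c') := by
  intro k; rw [Qlin_coeff, Qlin_coeff]; split <;> simp [h]
lemma cle_C_Qlin {c c' : ℝ} (hc' : 0 ≤ c') (h : c ≤ c') : cle (Polynomial.C c) (Qlin c') := by
  intro k; rw [Qlin_coeff, Polynomial.coeff_C]; split <;> rename_i hk
  · simp [hk, h]
  · split <;> norm_num

lemma Qlin_natDegree_le (c : ℝ) : (Qlin c).natDegree ≤ 1 := by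
  apply le_trans (Polynomial.natDegree_add_le _ _)
  simp only [Polynomial.natDegree_C]
  refine max_le (by norm_num) (le_trans (Polynomial.natDegree_mul_le) ?_)
  simp [Polynomial.natDegree_X]

lemma Qlin_deriv (c : ℝ) : derivative (Qlin c) = Polynomial.C 2 := by
  simp [Qlin]
  rfl
lemma cle_trans {P Q R : Polynomial ℝ} (h1 : cle P Q) (h2 : cle Q R) : cle P R :=
  fun k => le_trans (h1 k) (h2 k)
lemma cnn_C {c : ℝ} (hc : 0 ≤ c) : cnn (Polynomial.C c) := by
  intro k; rw [Polynomial.coeff_C]; split <;> simp [hc]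
lemma cle_C {c c' : ℝ} (h : c ≤ c') : cle (Polynomial.C c) (Polynomial.C c') := by
  intro k; rw [Polynomial.coeff_C, Polynomial.coeff_C]; split <;> simp [h]
lemma cle_refl (P : Polynomial ℝ) : cle P P := fun k => le_refl _
lemma Qlin_add (x y : ℝ) : Qlin (x + y) = Qlin x + Polynomial.C y := by
  simp only [Qlin, Polynomial.C_add]; ring

/-- `√(2n)` -/
def csq (n : ℕ) : ℝ := Real.sqrt (2*(n:ℝ))
lemma csq_nonneg (n : ℕ) : 0 ≤ csq n := Real.sqrt_nonneg _
lemma csq_mono {m n : ℕ} (h : m ≤ n) : csq m ≤ csq n := by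
  apply Real.sqrt_le_sqrt
  have : (m:ℝ) ≤ n := by exact_mod_cast h
  linarith
lemma csq_sq (n : ℕ) : csq n * csq n = 2*(n:ℝ) :=
  Real.mul_self_sqrt (by positivity)

def Rpoly (a : ℝ) (n : ℕ) : Polynomial ℝ := Qlin (a + csq n) ^ n

lemma cnn_Rpoly {a : ℝ} (ha : 0 ≤ a) (n : ℕ) : cnn (Rpoly a n) :=
  cnn_pow (cnn_Qlin (add_nonneg ha (csq_nonneg n))) n

lemma key_step {a : ℝ} (ha : 0 ≤ a) (n : ℕ) :
    cle (derivative (Rpoly a n) + Qlin a * Rpoly a n) (Rpoly a (n+1)) := by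
  have hc0 : (0:ℝ) ≤ csq n := csq_nonneg n
  have hc0' : (0:ℝ) ≤ csq (n+1) := csq_nonneg (n+1)
  have hc : csq n ≤ csq (n+1) := csq_mono (Nat.le_succ n)
  have hQ : cle (Qlin (a + csq n)) (Qlin (a + csq (n+1))) := cle_Qlin (by linarith)
  have hQn : cnn (Qlin (a + csq n)) := cnn_Qlin (by linarith)
  have hQn' : cnn (Qlin (a + csq (n+1))) := cnn_Qlin (by linarith)
  have hsplit : Rpoly a (n+1)
      = Qlin a * Qlin (a + csq (n+1)) ^ n
        + Polynomial.C (csq (n+1)) * Qlin (a + csq (n+1)) ^ n := by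
    rw [Rpoly, pow_succ', Qlin_add a (csq (n+1))]
    ring
  have hmain : cle (Qlin a * Rpoly a n) (Qlin a * Qlin (a + csq (n+1)) ^ n) :=
    cle_mul (cnn_Qlin ha) (cnn_Rpoly ha n) (cle_refl _) (cle_pow hQn hQ n)
  have hderiv : cle (derivative (Rpoly a n))
      (Polynomial.C (csq (n+1)) * Qlin (a + csq (n+1)) ^ n) := by
    match n with
    | 0 =>
      intro k
      have h0 : derivative (Rpoly a 0) = 0 := by simp [Rpoly]
      rw [h0]
      simpa using (cnn_mul (cnn_C hc0') (cnn_pow hQn' 0)) k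
    | (m+1) =>
      have h1 : derivative (Rpoly a (m+1))
          = Polynomial.C (2*((m:ℝ)+1)) * Qlin (a + csq (m+1)) ^ m := by
        rw [Rpoly, Polynomial.derivative_pow, Qlin_deriv]
        rw [Nat.add_sub_cancel, mul_right_comm, ← Polynomial.C_mul]
        congr 1
        push_cast; ring
      rw [h1]
      have s1 : cle (Polynomial.C (2*((m:ℝ)+1)) * Qlin (a + csq (m+1)) ^ m)
          (Polynomial.C (csq (m+2) * csq (m+2)) * Qlin (a + csq (m+2)) ^ m) := by
        apply cle_mul (cnn_C (by positivity)) (cnn_pow hQn m)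
        · apply cle_C; rw [csq_sq]; push_cast; linarith
        · exact cle_pow hQn (cle_Qlin (by linarith)) m
      refine cle_trans s1 ?_
      rw [show Polynomial.C (csq (m+2) * csq (m+2)) * Qlin (a + csq (m+2)) ^ m
          = Polynomial.C (csq (m+2)) * (Polynomial.C (csq (m+2)) * Qlin (a + csq (m+2)) ^ m) by
        rw [← mul_assoc, ← Polynomial.C_mul]]
      rw [pow_succ']
      exact cle_mul (cnn_C hc0') (cnn_mul (cnn_C hc0') (cnn_pow hQn' m)) (cle_refl _)
        (cle_mul (cnn_C hc0') (cnn_pow hQn' m)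
          (cle_C_Qlin (by linarith) (by linarith)) (cle_refl _))
  rw [hsplit]
  intro k
  rw [Polynomial.coeff_add, Polynomial.coeff_add]
  have := hderiv k; have := hmain k
  linarith
def Ppoly (a : ℝ) : ℕ → Polynomial ℂ
  | 0 => 1
  | n+1 => derivative (Ppoly a n) + (Polynomial.C ((a:ℂ)*I) - 2*X) * Ppoly a n

lemma Ppoly_coeff_succ (a : ℝ) (n k : ℕ) :
    (Ppoly a (n+1)).coeff k
      = (Ppoly a n).coeff (k+1) * ((k:ℂ)+1) + (a:ℂ)*I*(Ppoly a n).coeff k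
        - 2*((X*(Ppoly a n)).coeff k) := by
  show (derivative (Ppoly a n) + (Polynomial.C ((a:ℂ)*I) - 2*X) * Ppoly a n).coeff k = _
  rw [Polynomial.coeff_add, Polynomial.coeff_derivative, sub_mul, Polynomial.coeff_sub,
    Polynomial.coeff_C_mul, mul_assoc]
  rw [mul_assoc 2 X (Ppoly a n), Polynomial.coeff_ofNat_mul]; ring

lemma Ppoly_coeff_le {a : ℝ} (ha : 0 ≤ a) (n : ℕ) :
    ∀ k, ‖(Ppoly a n).coeff k‖ ≤ (Rpoly a n).coeff k := by
  induction n with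
  | zero =>
    intro k
    show ‖(1:Polynomial ℂ).coeff k‖ ≤ (Rpoly a 0).coeff k
    rw [Rpoly, pow_zero]
    rw [Polynomial.coeff_one, Polynomial.coeff_one]
    split <;> simp
  | succ n ih =>
    intro k
    rw [Ppoly_coeff_succ]
    have hR : (derivative (Rpoly a n) + Qlin a * Rpoly a n).coeff k ≤ (Rpoly a (n+1)).coeff k :=
      key_step ha n k
    have hexp : (derivative (Rpoly a n) + Qlin a * Rpoly a n).coeff k
        = (Rpoly a n).coeff (k+1) * ((k:ℝ)+1) + a*(Rpoly a n).coeff k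
          + 2*((X*(Rpoly a n)).coeff k) := by
      rw [Polynomial.coeff_add, Polynomial.coeff_derivative]
      have h2 : (Qlin a * Rpoly a n).coeff k
          = a*(Rpoly a n).coeff k + 2*((X*(Rpoly a n)).coeff k) := by
        rw [Qlin, add_mul, Polynomial.coeff_add, Polynomial.coeff_C_mul, mul_assoc,
          Polynomial.coeff_ofNat_mul]
      rw [h2]; ring
    rw [hexp] at hR
    refine le_trans (le_trans (norm_sub_le _ _) ?_) hR
    have t1 : ‖(Ppoly a n).coeff (k+1) * ((k:ℂ)+1)‖ ≤ (Rpoly a n).coeff (k+1) * ((k:ℝ)+1) := by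
      rw [norm_mul]
      have hnk : ‖((k:ℂ)+1)‖ = (k:ℝ)+1 := by
        rw [show ((k:ℂ)+1) = ((k+1:ℕ):ℂ) by push_cast; ring, Complex.norm_natCast]
        push_cast; ring
      rw [hnk]
      exact mul_le_mul_of_nonneg_right (ih (k+1)) (by positivity)
    have t2 : ‖(a:ℂ)*I*(Ppoly a n).coeff k‖ ≤ a*(Rpoly a n).coeff k := by
      rw [norm_mul, norm_mul, Complex.norm_I, Complex.norm_real, Real.norm_eq_abs,
        _root_.abs_of_nonneg ha, mul_one]
      exact mul_le_mul_of_nonneg_left (ih k) ha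
    have t3 : ‖(2:ℂ)*((X*(Ppoly a n)).coeff k)‖ ≤ 2*((X*(Rpoly a n)).coeff k) := by
      rw [norm_mul]
      have h2 : ‖(2:ℂ)‖ = 2 := by norm_num
      rw [h2]
      match k with
      | 0 => simp [Polynomial.mul_coeff_zero]
      | (m+1) =>
        rw [Polynomial.coeff_X_mul, Polynomial.coeff_X_mul]
        exact mul_le_mul_of_nonneg_left (ih m) (by norm_num)
    have t0 : ‖(Ppoly a n).coeff (k+1) * ((k:ℂ)+1) + (a:ℂ)*I*(Ppoly a n).coeff k‖
        ≤ ‖(Ppoly a n).coeff (k+1) * ((k:ℂ)+1)‖ + ‖(a:ℂ)*I*(Ppoly a n).coeff k‖ :=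
      norm_add_le _ _
    linarith

lemma Ppoly_natDegree_le (a : ℝ) (n : ℕ) : (Ppoly a n).natDegree ≤ n := by
  induction n with
  | zero => show (1:Polynomial ℂ).natDegree ≤ 0; simp
  | succ n ih =>
    show (derivative (Ppoly a n) + (Polynomial.C ((a:ℂ)*I) - 2*X) * Ppoly a n).natDegree ≤ n+1
    apply le_trans (Polynomial.natDegree_add_le _ _)
    apply max_le
    · have := Polynomial.natDegree_derivative_le (Ppoly a n); omega
    · apply le_trans (Polynomial.natDegree_mul_le)
      have h1 : (Polynomial.C ((a:ℂ)*I) - 2*X).natDegree ≤ 1 := by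
        apply le_trans (Polynomial.natDegree_sub_le _ _)
        apply max_le
        · rw [Polynomial.natDegree_C]; omega
        · apply le_trans (Polynomial.natDegree_mul_le)
          simp
      omega

lemma Rpoly_natDegree_le (a : ℝ) (n : ℕ) : (Rpoly a n).natDegree ≤ n := by
  apply le_trans (Polynomial.natDegree_pow_le)
  have := Qlin_natDegree_le (a + csq n)
  calc n * (Qlin (a + csq n)).natDegree ≤ n * 1 := Nat.mul_le_mul_left n this
    _ = n := by omega

lemma Ppoly_eval_bound {a : ℝ} (ha : 0 ≤ a) (n : ℕ) (t : ℝ) :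
    ‖Polynomial.eval (t:ℂ) (Ppoly a n)‖ ≤ (a + csq n + 2*|t|)^n := by
  rw [Polynomial.eval_eq_sum_range' (Nat.lt_succ_of_le (Ppoly_natDegree_le a n))]
  have hRn : Polynomial.eval |t| (Rpoly a n) = (a + csq n + 2*|t|)^n := by
    rw [Rpoly, Polynomial.eval_pow, Qlin, Polynomial.eval_add, Polynomial.eval_C,
      Polynomial.eval_mul, Polynomial.eval_X]
    norm_num
  rw [← hRn, Polynomial.eval_eq_sum_range' (Nat.lt_succ_of_le (Rpoly_natDegree_le a n))]
  refine le_trans (norm_sum_le _ _) ?_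
  apply Finset.sum_le_sum
  intro i _
  have hnt : ‖((t:ℂ))‖ = |t| := by rw [Complex.norm_real, Real.norm_eq_abs]
  rw [norm_mul, norm_pow, hnt]
  exact mul_le_mul_of_nonneg_right (Ppoly_coeff_le ha n i) (by positivity)
lemma Ppoly_inv {a : ℝ} (ha : 0 ≤ a) : ∀ n : ℕ,
    (∀ k, ∃ r : ℝ, 0 ≤ r ∧ (Ppoly a n).coeff k = Complex.I^(n+k) * (r:ℂ))
    ∧ (∃ s : ℝ, a^n ≤ s ∧ (Ppoly a n).coeff 0 = Complex.I^n * (s:ℂ)) := by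
  intro n
  induction n with
  | zero =>
    constructor
    · intro k
      match k with
      | 0 => exact ⟨1, by norm_num, by simp [Ppoly]⟩
      | (m+1) => exact ⟨0, le_refl _, by simp [Ppoly, Polynomial.coeff_one]⟩
    · exact ⟨1, by norm_num, by simp [Ppoly]⟩
  | succ n ih =>
    obtain ⟨h1, s, hs, hs0⟩ := ih
    have hmain : ∀ k, ∃ r : ℝ, 0 ≤ r ∧ (Ppoly a (n+1)).coeff k = Complex.I^(n+1+k) * (r:ℂ) := by
      intro k
      obtain ⟨r1, hr1, he1⟩ := h1 (k+1)
      obtain ⟨r0, hr0, he0⟩ := h1 k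
      match k with
      | 0 =>
        refine ⟨r1 + a * r0, by positivity, ?_⟩
        rw [Ppoly_coeff_succ, he1, he0, Polynomial.mul_coeff_zero]
        simp only [Polynomial.coeff_X_zero, zero_mul, mul_zero, sub_zero]
        push_cast
        ring
      | (m+1) =>
        obtain ⟨rm, hrm, hem⟩ := h1 m
        refine ⟨((m:ℝ)+2) * r1 + a * r0 + 2 * rm, by positivity, ?_⟩
        rw [Ppoly_coeff_succ, he1, he0, Polynomial.coeff_X_mul, hem]
        have E1 : Complex.I^(n+(m+1+1)) = -Complex.I^(n+m) := by
          rw [show n+(m+1+1) = (n+m)+2 by omega, pow_add, Complex.I_sq]; ring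
        have ET : Complex.I^(n+1+(m+1)) = -Complex.I^(n+m) := by
          rw [show n+1+(m+1) = (n+m)+2 by omega, pow_add, Complex.I_sq]; ring
        have E0 : Complex.I^(n+(m+1)) = Complex.I^(n+m) * Complex.I := by
          rw [show n+(m+1) = (n+m)+1 by omega, pow_succ]
        rw [E1, ET, E0]
        push_cast
        linear_combination ((a:ℂ) * Complex.I^(n+m) * (r0:ℂ)) * Complex.I_mul_I
    refine ⟨hmain, ?_⟩
    obtain ⟨r1, hr1, he1⟩ := h1 1
    refine ⟨r1 + a * s, ?_, ?_⟩
    · have : a^(n+1) ≤ a * s := by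
        rw [pow_succ, mul_comm]
        exact mul_le_mul_of_nonneg_left hs ha
      linarith
    · rw [Ppoly_coeff_succ, he1, hs0, Polynomial.mul_coeff_zero]
      simp only [Polynomial.coeff_X_zero, zero_mul, mul_zero, sub_zero]
      push_cast
      ring

lemma gfun_eval_lower {a : ℝ} (ha : 0 ≤ a) (p : ℕ) :
    a^(2*p) ≤ ‖Polynomial.eval (0:ℂ) (Ppoly a (2*p))‖ := by
  obtain ⟨-, s, hs, hs0⟩ := Ppoly_inv ha (2*p)
  have h0 : Polynomial.eval (0:ℂ) (Ppoly a (2*p)) = (Ppoly a (2*p)).coeff 0 :=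
    (Polynomial.coeff_zero_eq_eval_zero _).symm
  rw [h0, hs0, norm_mul]
  have h1 : ‖Complex.I^(2*p)‖ = 1 := by rw [norm_pow, Complex.norm_I, one_pow]
  rw [h1, one_mul, Complex.norm_real, Real.norm_eq_abs]
  calc a^(2*p) ≤ s := hs
    _ ≤ |s| := le_abs_self s
def gfun (a : ℝ) : ℝ → ℝ := fun t => (Complex.exp ((a:ℂ)*(t:ℂ)*I - (t:ℂ)^2)).re

lemma abs_pow_mul_exp_le (k : ℕ) (t : ℝ) :
    |t|^k * Real.exp (-t^2) ≤ (k:ℝ)^((k:ℝ)/2) := by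
  have hexp1 : Real.exp (-t^2) ≤ 1 := by
    rw [show (1:ℝ) = Real.exp 0 by rw [Real.exp_zero]]
    exact Real.exp_le_exp.mpr (by positivity |> neg_nonpos_of_nonneg)
  rcases Nat.eq_zero_or_pos k with hk | hk
  · subst hk
    simpa using hexp1
  have hk0 : (0:ℝ) < k := by exact_mod_cast hk
  have hhalf : Real.sqrt (k:ℝ) ^ k = (k:ℝ)^((k:ℝ)/2) := by
    rw [Real.sqrt_eq_rpow, ← Real.rpow_natCast ((k:ℝ)^((1:ℝ)/2)) k, ← Real.rpow_mul (le_of_lt hk0)]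
    congr 1; ring
  rcases le_or_gt (t^2) (k:ℝ) with hc | hc
  · have hs : |t| ≤ Real.sqrt (k:ℝ) := by
      rw [← Real.sqrt_sq_eq_abs]
      exact Real.sqrt_le_sqrt hc
    calc |t|^k * Real.exp (-t^2) ≤ |t|^k * 1 :=
          mul_le_mul_of_nonneg_left hexp1 (by positivity)
      _ = |t|^k := mul_one _
      _ ≤ Real.sqrt (k:ℝ) ^ k := pow_le_pow_left₀ (abs_nonneg t) hs k
      _ = (k:ℝ)^((k:ℝ)/2) := hhalf
  · have ht0 : 0 < t^2 := lt_trans hk0 hc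
    have hts : Real.sqrt (k:ℝ) ≤ |t| := by
      rw [← Real.sqrt_sq_eq_abs]
      exact Real.sqrt_le_sqrt (le_of_lt hc)
    have habs : 0 < |t| := by
      have := Real.sqrt_pos.mpr hk0
      linarith
    have key : (t^2)^k / (k.factorial:ℝ) ≤ Real.exp (t^2) := by
      calc (t^2)^k / (k.factorial:ℝ)
          ≤ ∑ i ∈ Finset.range (k+1), (t^2)^i / (i.factorial:ℝ) := by
            apply Finset.single_le_sum (f := fun i => (t^2)^i / (i.factorial:ℝ))
              (fun i _ => by positivity) (Finset.self_mem_range_succ k)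
        _ ≤ Real.exp (t^2) := Real.sum_le_exp_of_nonneg (by positivity) (k+1)
    have key2 : (t^2)^k ≤ (k.factorial:ℝ) * Real.exp (t^2) := by
      have hkf : (0:ℝ) < (k.factorial:ℝ) := by exact_mod_cast Nat.factorial_pos k
      rw [div_le_iff₀ hkf] at key
      linarith [key]
    have hfac : Real.exp (-t^2) ≤ (k.factorial:ℝ) / (t^2)^k := by
      rw [Real.exp_neg, le_div_iff₀ (by positivity : (0:ℝ) < (t^2)^k),
        inv_mul_le_iff₀ (Real.exp_pos _), mul_comm]
      exact key2
    calc |t|^k * Real.exp (-t^2) ≤ |t|^k * ((k.factorial:ℝ) / (t^2)^k) :=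
          mul_le_mul_of_nonneg_left hfac (by positivity)
      _ = (k.factorial:ℝ) / |t|^k := by
          have habs' : |t| ≠ 0 := ne_of_gt habs
          have ht2 : (t^2)^k = |t|^k * |t|^k := by rw [← _root_.sq_abs t]; ring
          rw [ht2]
          field_simp
      _ ≤ ((k:ℝ)^k) / (Real.sqrt (k:ℝ))^k := by
          apply div_le_div₀ (by positivity) ?_ (by positivity) (pow_le_pow_left₀ (Real.sqrt_nonneg _) hts k)
          exact_mod_cast Nat.factorial_le_pow k
      _ = (k:ℝ)^((k:ℝ)/2) := by
          rw [hhalf, ← Real.rpow_natCast (k:ℝ) k, ← Real.rpow_sub hk0]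
          congr 1; ring

lemma rpow_half_mul_le (m n : ℕ) :
    (n:ℝ)^((n:ℝ)/2) * (m:ℝ)^((m:ℝ)/2) ≤ ((m+n:ℕ):ℝ)^(((m+n:ℕ):ℝ)/2) := by
  rcases Nat.eq_zero_or_pos (m+n) with h | h
  · have hm : m = 0 := by omega
    have hn : n = 0 := by omega
    subst hm; subst hn; norm_num
  have hs : (0:ℝ) < ((m+n:ℕ):ℝ) := by exact_mod_cast h
  have h1 : (n:ℝ)^((n:ℝ)/2) ≤ ((m+n:ℕ):ℝ)^((n:ℝ)/2) :=
    Real.rpow_le_rpow (by positivity) (by push_cast; linarith [Nat.cast_nonneg (α := ℝ) m]) (by positivity)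
  have h2 : (m:ℝ)^((m:ℝ)/2) ≤ ((m+n:ℕ):ℝ)^((m:ℝ)/2) :=
    Real.rpow_le_rpow (by positivity) (by push_cast; linarith [Nat.cast_nonneg (α := ℝ) n]) (by positivity)
  calc (n:ℝ)^((n:ℝ)/2) * (m:ℝ)^((m:ℝ)/2)
      ≤ ((m+n:ℕ):ℝ)^((n:ℝ)/2) * ((m+n:ℕ):ℝ)^((m:ℝ)/2) := by
        apply mul_le_mul h1 h2 (by positivity) (by positivity)
    _ = ((m+n:ℕ):ℝ)^(((m+n:ℕ):ℝ)/2) := by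
        rw [← Real.rpow_add hs]
        congr 1; push_cast; ring

lemma csq_pow_le (n : ℕ) : csq n ^ n ≤ 2^n * (n:ℝ)^((n:ℝ)/2) := by
  have h1 : csq n = Real.sqrt 2 * Real.sqrt (n:ℝ) := by
    rw [csq, ← Real.sqrt_mul (by norm_num)]
  rw [h1, mul_pow]
  have h2 : Real.sqrt 2 ^ n ≤ 2^n := by
    apply pow_le_pow_left₀ (Real.sqrt_nonneg _)
    nlinarith [Real.sq_sqrt (show (0:ℝ) ≤ 2 by norm_num), Real.sqrt_nonneg 2]
  have h3 : Real.sqrt (n:ℝ) ^ n = (n:ℝ)^((n:ℝ)/2) := by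
    rcases Nat.eq_zero_or_pos n with h | h
    · subst h; norm_num
    rw [Real.sqrt_eq_rpow, ← Real.rpow_natCast ((n:ℝ)^((1:ℝ)/2)) n,
      ← Real.rpow_mul (by positivity)]
    congr 1; ring
  rw [h3]
  exact mul_le_mul_of_nonneg_right h2 (by positivity)

lemma tri_pow_le {x y z : ℝ} (hx : 0 ≤ x) (hy : 0 ≤ y) (hz : 0 ≤ z) (n : ℕ) :
    (x + y + z)^n ≤ 3^n * (x^n + y^n + z^n) := by
  set w := max x (max y z) with hw
  have hxw : x ≤ w := le_max_left _ _
  have hyw : y ≤ w := le_trans (le_max_left _ _) (le_max_right _ _)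
  have hzw : z ≤ w := le_trans (le_max_right _ _) (le_max_right _ _)
  have hw0 : 0 ≤ w := le_trans hx hxw
  have h1 : (x+y+z)^n ≤ (3*w)^n := by
    apply pow_le_pow_left₀ (by positivity)
    linarith
  have h2 : w^n ≤ x^n + y^n + z^n := by
    rcases max_cases x (max y z) with ⟨h, -⟩ | ⟨h, -⟩
    · rw [hw, h]; nlinarith [pow_nonneg hy n, pow_nonneg hz n, pow_le_pow_left₀ hx (le_refl x) n]
    · rcases max_cases y z with ⟨h', -⟩ | ⟨h', -⟩
      · rw [hw, h, h']; nlinarith [pow_nonneg hx n, pow_nonneg hz n]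
      · rw [hw, h, h']; nlinarith [pow_nonneg hx n, pow_nonneg hy n]
  calc (x+y+z)^n ≤ (3*w)^n := h1
    _ = 3^n * w^n := mul_pow 3 w n
    _ ≤ 3^n * (x^n + y^n + z^n) := mul_le_mul_of_nonneg_left h2 (by positivity)


lemma expArg_hasDerivAt (a : ℝ) (t : ℝ) :
    HasDerivAt (fun s : ℝ => (a:ℂ)*(s:ℂ)*I - (s:ℂ)^2) ((a:ℂ)*I - 2*(t:ℂ)) t := by
  have h1 : HasDerivAt (fun s : ℝ => (s:ℂ)) 1 t := Complex.ofRealCLM.hasDerivAt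
  have h2 : HasDerivAt (fun s : ℝ => (a:ℂ)*(s:ℂ)*I) ((a:ℂ)*I) t := by
    have := (h1.const_mul ((a:ℂ))).mul_const I
    simpa [mul_comm, mul_assoc] using this
  have h3 : HasDerivAt (fun s : ℝ => (s:ℂ)^2) (2*(t:ℂ)) t := by
    have h := h1.mul h1
    have h' : HasDerivAt (fun s : ℝ => (s:ℂ)*(s:ℂ)) (2*(t:ℂ)) t := by
      exact h.congr_deriv (by ring)
    simpa [pow_two] using h'
  exact h2.sub h3

lemma cexp_hasDerivAt (a : ℝ) (t : ℝ) :
    HasDerivAt (fun s : ℝ => Complex.exp ((a:ℂ)*(s:ℂ)*I - (s:ℂ)^2))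
      (Complex.exp ((a:ℂ)*(t:ℂ)*I - (t:ℂ)^2) * ((a:ℂ)*I - 2*(t:ℂ))) t :=
  (expArg_hasDerivAt a t).cexp

lemma Fn_hasDerivAt (a : ℝ) (n : ℕ) (t : ℝ) :
    HasDerivAt (fun s : ℝ => eval (s:ℂ) (Ppoly a n) * Complex.exp ((a:ℂ)*(s:ℂ)*I - (s:ℂ)^2))
      (eval (t:ℂ) (Ppoly a (n+1)) * Complex.exp ((a:ℂ)*(t:ℂ)*I - (t:ℂ)^2)) t := by
  have hp : HasDerivAt (fun s : ℝ => eval (s:ℂ) (Ppoly a n))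
      (eval (t:ℂ) (derivative (Ppoly a n))) t :=
    ((Ppoly a n).hasDerivAt (t:ℂ)).comp_ofReal
  have := hp.mul (cexp_hasDerivAt a t)
  refine this.congr_deriv (Eq.symm ?_)
  show eval (t:ℂ) (derivative (Ppoly a n) + (Polynomial.C ((a:ℂ)*I) - 2*X) * Ppoly a n) * _ = _
  simp only [eval_add, eval_mul, eval_sub, eval_C, eval_ofNat, eval_X]
  ring

lemma gfun_deriv (a : ℝ) (n : ℕ) :
    deriv^[n] (gfun a)
      = fun t : ℝ => (eval (t:ℂ) (Ppoly a n) * Complex.exp ((a:ℂ)*(t:ℂ)*I - (t:ℂ)^2)).re := by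
  induction n with
  | zero =>
    funext t; simp [gfun, Ppoly]
  | succ n ih =>
    rw [Function.iterate_succ_apply', ih]
    funext t
    have h := (Fn_hasDerivAt a n t)
    have : HasDerivAt (fun s : ℝ =>
        (eval (s:ℂ) (Ppoly a n) * Complex.exp ((a:ℂ)*(s:ℂ)*I - (s:ℂ)^2)).re)
        ((eval (t:ℂ) (Ppoly a (n+1)) * Complex.exp ((a:ℂ)*(t:ℂ)*I - (t:ℂ)^2)).re) t :=
      (Complex.reCLM.hasFDerivAt.comp_hasDerivAt t h)
    exact this.deriv

lemma gfun_smooth (a : ℝ) : ContDiff ℝ (⊤ : ℕ∞) (gfun a) := by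
  apply Complex.reCLM.contDiff.comp
  apply Complex.contDiff_exp.comp
  apply ContDiff.sub
  · exact (ContDiff.mul (contDiff_const.mul Complex.ofRealCLM.contDiff) contDiff_const)
  · exact (Complex.ofRealCLM.contDiff).pow 2
lemma arg_re (a t : ℝ) : ((a:ℂ)*(t:ℂ)*I - (t:ℂ)^2).re = -t^2 := by
  simp [Complex.sub_re, Complex.mul_re, Complex.I_re, Complex.I_im, pow_two,
    Complex.ofReal_re, Complex.ofReal_im]

lemma gfun_deriv_bound {a : ℝ} (ha : 0 ≤ a) (n : ℕ) (t : ℝ) :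
    |deriv^[n] (gfun a) t| ≤ (a + csq n + 2*|t|)^n * Real.exp (-t^2) := by
  rw [gfun_deriv]
  calc |((Polynomial.eval (t:ℂ) (Ppoly a n)) * Complex.exp ((a:ℂ)*(t:ℂ)*I - (t:ℂ)^2)).re|
      ≤ ‖(Polynomial.eval (t:ℂ) (Ppoly a n)) * Complex.exp ((a:ℂ)*(t:ℂ)*I - (t:ℂ)^2)‖ :=
        Complex.abs_re_le_norm _
    _ = ‖Polynomial.eval (t:ℂ) (Ppoly a n)‖ * ‖Complex.exp ((a:ℂ)*(t:ℂ)*I - (t:ℂ)^2)‖ :=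
        norm_mul _ _
    _ ≤ (a + csq n + 2*|t|)^n * Real.exp (-t^2) := by
        apply mul_le_mul (Ppoly_eval_bound ha n t) _ (norm_nonneg _)
          (pow_nonneg (by nlinarith [csq_nonneg n, abs_nonneg t]) n)
        rw [Complex.norm_exp, arg_re]

lemma master_bound {a : ℝ} (ha : 0 ≤ a) (m n : ℕ) (t : ℝ) :
    |t^m * deriv^[n] (gfun a) t|
      ≤ 6^(m+n) * (a^n * (m:ℝ)^((m:ℝ)/2) + 2 * ((m+n:ℕ):ℝ)^(((m+n:ℕ):ℝ)/2)) := by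
  have h0 : |t^m * deriv^[n] (gfun a) t| = |t|^m * |deriv^[n] (gfun a) t| := by
    rw [abs_mul, _root_.abs_pow]
  rw [h0]
  have h1 : |t|^m * |deriv^[n] (gfun a) t|
      ≤ |t|^m * ((a + csq n + 2*|t|)^n * Real.exp (-t^2)) :=
    mul_le_mul_of_nonneg_left (gfun_deriv_bound ha n t) (by positivity)
  have h2 : (a + csq n + 2*|t|)^n ≤ 3^n * (a^n + csq n^n + (2*|t|)^n) :=
    tri_pow_le ha (csq_nonneg n) (by positivity) n
  have hT1 : a^n * (|t|^m * Real.exp (-t^2)) ≤ a^n * (m:ℝ)^((m:ℝ)/2) :=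
    mul_le_mul_of_nonneg_left (abs_pow_mul_exp_le m t) (by positivity)
  have hT2 : csq n^n * (|t|^m * Real.exp (-t^2)) ≤ 2^n * ((m+n:ℕ):ℝ)^(((m+n:ℕ):ℝ)/2) := by
    calc csq n^n * (|t|^m * Real.exp (-t^2))
        ≤ (2^n * (n:ℝ)^((n:ℝ)/2)) * ((m:ℝ)^((m:ℝ)/2)) := by
          apply mul_le_mul (csq_pow_le n) (abs_pow_mul_exp_le m t) (by positivity) (by positivity)
      _ = 2^n * ((n:ℝ)^((n:ℝ)/2) * (m:ℝ)^((m:ℝ)/2)) := by ring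
      _ ≤ 2^n * ((m+n:ℕ):ℝ)^(((m+n:ℕ):ℝ)/2) :=
          mul_le_mul_of_nonneg_left (rpow_half_mul_le m n) (by positivity)
  have hT3 : (2*|t|)^n * (|t|^m * Real.exp (-t^2)) ≤ 2^n * ((m+n:ℕ):ℝ)^(((m+n:ℕ):ℝ)/2) := by
    have : (2*|t|)^n * (|t|^m * Real.exp (-t^2)) = 2^n * (|t|^(m+n) * Real.exp (-t^2)) := by
      rw [mul_pow, pow_add]; ring
    rw [this]
    exact mul_le_mul_of_nonneg_left (abs_pow_mul_exp_le (m+n) t) (by positivity)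
  have hE : (0:ℝ) ≤ |t|^m * Real.exp (-t^2) := by positivity
  have h9 : (3:ℝ)^n ≤ 6^(m+n) := by
    calc (3:ℝ)^n ≤ 6^n := pow_le_pow_left₀ (by norm_num) (by norm_num) n
      _ ≤ 6^(m+n) := pow_le_pow_right₀ (by norm_num) (by omega)
  have h10 : (3:ℝ)^n * 2^n ≤ 6^(m+n) := by
    calc (3:ℝ)^n * 2^n = 6^n := by rw [← mul_pow]; norm_num
      _ ≤ 6^(m+n) := pow_le_pow_right₀ (by norm_num) (by omega)
  have hmn : (0:ℝ) ≤ ((m+n:ℕ):ℝ)^(((m+n:ℕ):ℝ)/2) := by positivity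
  have c3 : (0:ℝ) ≤ (3:ℝ)^n := by positivity
  have e1 : (3:ℝ)^n * (a^n * (|t|^m * Real.exp (-t^2))) ≤ 6^(m+n) * (a^n * (m:ℝ)^((m:ℝ)/2)) :=
    mul_le_mul h9 hT1 (by positivity) (by positivity)
  have e2 : (3:ℝ)^n * (csq n^n * (|t|^m * Real.exp (-t^2)))
      ≤ 6^(m+n) * ((m+n:ℕ):ℝ)^(((m+n:ℕ):ℝ)/2) := by
    calc (3:ℝ)^n * (csq n^n * (|t|^m * Real.exp (-t^2)))
        ≤ (3:ℝ)^n * (2^n * ((m+n:ℕ):ℝ)^(((m+n:ℕ):ℝ)/2)) := mul_le_mul_of_nonneg_left hT2 c3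
      _ = ((3:ℝ)^n * 2^n) * ((m+n:ℕ):ℝ)^(((m+n:ℕ):ℝ)/2) := by ring
      _ ≤ 6^(m+n) * ((m+n:ℕ):ℝ)^(((m+n:ℕ):ℝ)/2) := mul_le_mul_of_nonneg_right h10 hmn
  have e3 : (3:ℝ)^n * ((2*|t|)^n * (|t|^m * Real.exp (-t^2)))
      ≤ 6^(m+n) * ((m+n:ℕ):ℝ)^(((m+n:ℕ):ℝ)/2) := by
    calc (3:ℝ)^n * ((2*|t|)^n * (|t|^m * Real.exp (-t^2)))
        ≤ (3:ℝ)^n * (2^n * ((m+n:ℕ):ℝ)^(((m+n:ℕ):ℝ)/2)) := mul_le_mul_of_nonneg_left hT3 c3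
      _ = ((3:ℝ)^n * 2^n) * ((m+n:ℕ):ℝ)^(((m+n:ℕ):ℝ)/2) := by ring
      _ ≤ 6^(m+n) * ((m+n:ℕ):ℝ)^(((m+n:ℕ):ℝ)/2) := mul_le_mul_of_nonneg_right h10 hmn
  have step : |t|^m * |deriv^[n] (gfun a) t|
      ≤ (3:ℝ)^n * (a^n * (|t|^m * Real.exp (-t^2)) + csq n^n * (|t|^m * Real.exp (-t^2))
        + (2*|t|)^n * (|t|^m * Real.exp (-t^2))) := by
    refine le_trans h1 ?_
    have h7 : (a + csq n + 2*|t|)^n * (|t|^m * Real.exp (-t^2))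
        ≤ 3^n * (a^n + csq n^n + (2*|t|)^n) * (|t|^m * Real.exp (-t^2)) :=
      mul_le_mul_of_nonneg_right h2 hE
    calc |t|^m * ((a + csq n + 2*|t|)^n * Real.exp (-t^2))
        = (a + csq n + 2*|t|)^n * (|t|^m * Real.exp (-t^2)) := by ring
      _ ≤ 3^n * (a^n + csq n^n + (2*|t|)^n) * (|t|^m * Real.exp (-t^2)) := h7
      _ = (3:ℝ)^n * (a^n * (|t|^m * Real.exp (-t^2)) + csq n^n * (|t|^m * Real.exp (-t^2))
        + (2*|t|)^n * (|t|^m * Real.exp (-t^2))) := by ring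
  refine le_trans step ?_
  have expand : (3:ℝ)^n * (a^n * (|t|^m * Real.exp (-t^2)) + csq n^n * (|t|^m * Real.exp (-t^2))
        + (2*|t|)^n * (|t|^m * Real.exp (-t^2)))
      = (3:ℝ)^n * (a^n * (|t|^m * Real.exp (-t^2)))
        + (3:ℝ)^n * (csq n^n * (|t|^m * Real.exp (-t^2)))
        + (3:ℝ)^n * ((2*|t|)^n * (|t|^m * Real.exp (-t^2))) := by ring
  rw [expand]
  linarith

lemma gfun_lower {a : ℝ} (ha : 0 ≤ a) (p : ℕ) :
    a^(2*p) ≤ |deriv^[2*p] (gfun a) 0| := by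
  rw [gfun_deriv]
  have h0 : ((a:ℂ)*((0:ℝ):ℂ)*I - ((0:ℝ):ℂ)^2) = 0 := by push_cast; ring
  have h1 : (Polynomial.eval ((0:ℝ):ℂ) (Ppoly a (2*p)) * Complex.exp ((a:ℂ)*((0:ℝ):ℂ)*I - ((0:ℝ):ℂ)^2))
      = Polynomial.eval (0:ℂ) (Ppoly a (2*p)) := by
    rw [h0, Complex.exp_zero, mul_one]
    norm_num
  calc a^(2*p) ≤ ‖Polynomial.eval (0:ℂ) (Ppoly a (2*p))‖ := gfun_eval_lower ha p
    _ = |(Polynomial.eval (0:ℂ) (Ppoly a (2*p))).re| := by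
        obtain ⟨-, s, hs, hs0⟩ := Ppoly_inv ha (2*p)
        have he : Polynomial.eval (0:ℂ) (Ppoly a (2*p)) = (Ppoly a (2*p)).coeff 0 :=
          (Polynomial.coeff_zero_eq_eval_zero _).symm
        rw [he, hs0]
        have hI : Complex.I^(2*p) = ((-1:ℝ)^p : ℝ) := by
          rw [pow_mul, Complex.I_sq]; push_cast; ring
        rw [hI]
        rw [show ((((-1:ℝ)^p:ℝ)):ℂ) * (s:ℂ) = (((-1:ℝ)^p * s : ℝ):ℂ) by push_cast; ring]
        rw [Complex.norm_real, Complex.ofReal_re, Real.norm_eq_abs]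
    _ = |(Polynomial.eval ((0:ℝ):ℂ) (Ppoly a (2*p)) * Complex.exp ((a:ℂ)*((0:ℝ):ℂ)*I - ((0:ℝ):ℂ)^2)).re| := by
        rw [h1]


namespace IsLC

lemma mu_mono_succ {M : ℕ → ℝ} (hM : IsLC M) (p : ℕ) : M (p+1) / M p ≤ M (p+2) / M (p+1) := by
  rw [div_le_div_iff₀ (hM.pos p) (hM.pos (p+1))]
  nlinarith [hM.logConvex p, hM.pos p, hM.pos (p+1), hM.pos (p+2)]

lemma mu_mono {M : ℕ → ℝ} (hM : IsLC M) : ∀ {p q : ℕ}, p ≤ q → M (p+1) / M p ≤ M (q+1) / M q := by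
  intro p q h
  induction q with
  | zero =>
    have : p = 0 := by omega
    subst this; exact le_refl _
  | succ q ih =>
    rcases Nat.lt_or_ge p (q+1) with h' | h'
    · exact le_trans (ih (by omega)) (hM.mu_mono_succ q)
    · have : p = q+1 := by omega
      subst this; exact le_refl _

lemma mono {M : ℕ → ℝ} (hM : IsLC M) (p : ℕ) : M p ≤ M (p+1) := by
  have h1 : (1:ℝ) ≤ M 1 / M 0 := by rw [hM.norm0, div_one]; exact hM.norm1
  have h2 : M 1 / M 0 ≤ M (p+1) / M p := by
    rcases Nat.eq_zero_or_pos p with h | h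
    · subst h; exact le_refl _
    · exact hM.mu_mono (by omega)
  have := le_trans h1 h2
  rw [le_div_iff₀ (hM.pos p)] at this
  linarith

lemma mono_le {M : ℕ → ℝ} (hM : IsLC M) : ∀ {p q : ℕ}, p ≤ q → M p ≤ M q := by
  intro p q h
  induction q with
  | zero => simp_all
  | succ q ih =>
    rcases Nat.lt_or_ge p (q+1) with h' | h'
    · exact le_trans (ih (by omega)) (hM.mono q)
    · have : p = q+1 := by omega
      subst this; exact le_refl _

/-- `b := M (q+1)/M q` dominates: `b^j * M q ≤ b^q * M j` for all `j`. -/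
lemma mu_bound {M : ℕ → ℝ} (hM : IsLC M) (q : ℕ) : ∀ j, (M (q+1) / M q)^j * M q ≤ (M (q+1) / M q)^q * M j := by
  set b := M (q+1) / M q with hb
  have hbpos : 0 < b := div_pos (hM.pos (q+1)) (hM.pos q)
  -- (i) : ∀ k, b^k * M q ≤ M (q+k)
  have hi : ∀ k, b^k * M q ≤ M (q+k) := by
    intro k
    induction k with
    | zero => simp
    | succ k ih =>
      have hmu : b ≤ M (q+k+1) / M (q+k) := by
        rcases Nat.eq_zero_or_pos k with h | h
        · subst h; exact le_refl _
        · exact hM.mu_mono (by omega)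
      calc b^(k+1) * M q = b * (b^k * M q) := by ring
        _ ≤ b * M (q+k) := by
            exact mul_le_mul_of_nonneg_left ih (le_of_lt hbpos)
        _ ≤ (M (q+k+1) / M (q+k)) * M (q+k) := mul_le_mul_of_nonneg_right hmu (le_of_lt (hM.pos _))
        _ = M (q+k+1) := div_mul_cancel₀ _ (ne_of_gt (hM.pos (q+k)))
        _ = M (q+(k+1)) := by ring_nf
  -- (ii) : ∀ k ≤ q, M q ≤ b^k * M (q-k)
  have hii : ∀ k, k ≤ q → M q ≤ b^k * M (q-k) := by
    intro k
    induction k with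
    | zero => intro _; simp
    | succ k ih =>
      intro hk
      have h1 : M q ≤ b^k * M (q-k) := ih (by omega)
      have hqk : q - k = (q - (k+1)) + 1 := by omega
      have hmu2 : M (q-(k+1)+1) / M (q-(k+1)) ≤ b := by
        rcases Nat.lt_or_ge (q-(k+1)) q with h | h
        · exact hM.mu_mono (by omega)
        · have : q - (k+1) = q := by omega
          rw [this]
      have h2 : M (q-k) ≤ b * M (q-(k+1)) := by
        rw [hqk]
        have := (div_le_iff₀ (hM.pos (q-(k+1)))).mp hmu2
        linarith
      calc M q ≤ b^k * M (q-k) := h1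
        _ ≤ b^k * (b * M (q-(k+1))) := mul_le_mul_of_nonneg_left h2 (by positivity)
        _ = b^(k+1) * M (q-(k+1)) := by ring
  intro j
  rcases Nat.lt_or_ge j q with h | h
  · -- j < q : use (ii) with k = q - j
    have h2 := hii (q-j) (by omega)
    have hqj : q - (q-j) = j := by omega
    rw [hqj] at h2
    calc b^j * M q ≤ b^j * (b^(q-j) * M j) := mul_le_mul_of_nonneg_left h2 (by positivity)
      _ = b^(j + (q-j)) * M j := by rw [pow_add]; ring
      _ = b^q * M j := by congr 2; omega
  · -- j ≥ q : use (i) with k = j - q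
    have h1 := hi (j-q)
    have hqj : q + (j-q) = j := by omega
    rw [hqj] at h1
    calc b^j * M q = b^(q + (j-q)) * M q := by congr 2; omega
      _ = b^q * (b^(j-q) * M q) := by rw [pow_add]; ring
      _ ≤ b^q * M j := mul_le_mul_of_nonneg_left h1 (by positivity)

/-- every geometric sequence is dominated: `a^n ≤ E * M n`. -/
lemma geom_dom {M : ℕ → ℝ} (hM : IsLC M) {a : ℝ} (ha : 0 ≤ a) : ∃ E : ℝ, 1 ≤ E ∧ ∀ n, a^n ≤ E * M n := by
  have h := hM.root_tendsto
  rw [Filter.tendsto_atTop] at h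
  obtain ⟨J, hJ⟩ := (h (a+1)).exists_forall_of_atTop
  refine ⟨1 + ∑ j ∈ Finset.range (J+1), a^j / M j, ?_, ?_⟩
  · have : (0:ℝ) ≤ ∑ j ∈ Finset.range (J+1), a^j / M j := by
      apply Finset.sum_nonneg
      intro j _
      have := hM.pos j
      positivity
    linarith
  · intro n
    rcases Nat.lt_or_ge n (J+1) with h' | h'
    · have h1 : a^n / M n ≤ ∑ j ∈ Finset.range (J+1), a^j / M j := by
        apply Finset.single_le_sum (f := fun j => a^j / M j)
          (fun j _ => by have := hM.pos j; positivity) (Finset.mem_range.mpr h')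
      have h2 : a^n / M n ≤ 1 + ∑ j ∈ Finset.range (J+1), a^j / M j := by
        have : (0:ℝ) ≤ 1 := by norm_num
        linarith
      rw [div_le_iff₀ (hM.pos n)] at h2
      linarith [h2]
    · have hn1 : 1 ≤ n := by omega
      have hroot := hJ n (by omega)
      have hMn : (a+1)^n ≤ M n := by
        have hMp := hM.pos n
        have hx : ((M n) ^ (1/(n:ℝ)))^(n:ℕ) = M n := by
          rw [← Real.rpow_natCast ((M n) ^ (1/(n:ℝ))) n, ← Real.rpow_mul (le_of_lt hMp)]
          rw [show 1/(n:ℝ) * (n:ℕ) = 1 by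
            field_simp]
          exact Real.rpow_one _
        rw [← hx]
        apply pow_le_pow_left₀ (by positivity) hroot
      have h3 : a^n ≤ (a+1)^n := pow_le_pow_left₀ ha (by linarith) n
      have hE1 : (1:ℝ) ≤ 1 + ∑ j ∈ Finset.range (J+1), a^j / M j := by
        have : (0:ℝ) ≤ ∑ j ∈ Finset.range (J+1), a^j / M j := by
          apply Finset.sum_nonneg
          intro j _
          have := hM.pos j
          positivity
        linarith
      calc a^n ≤ M n := le_trans h3 hMn
        _ = 1 * M n := (one_mul _).symm
        _ ≤ (1 + ∑ j ∈ Finset.range (J+1), a^j / M j) * M n :=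
            mul_le_mul_of_nonneg_right hE1 (le_of_lt (hM.pos n))

end IsLC
lemma pderiv_comp (g : ℝ → ℝ) (hg : Differentiable ℝ g) :
    pderivOp (0 : Fin 1) (fun x => g (x 0)) = fun x => deriv g (x 0) := by
  funext x
  set π : (Fin 1 → ℝ) →L[ℝ] ℝ := ContinuousLinearMap.proj (R := ℝ) (φ := fun _ : Fin 1 => ℝ) 0
  have hπ : HasFDerivAt (fun x : Fin 1 → ℝ => x 0) π x := π.hasFDerivAt
  have h := ((hg (x 0)).hasDerivAt).comp_hasFDerivAt x hπ
  have h2 : fderiv ℝ (fun x : Fin 1 → ℝ => g (x 0)) x = deriv g (x 0) • π := h.fderiv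
  simp [pderivOp, h2, π]

lemma comp_smooth (g : ℝ → ℝ) (hg : ContDiff ℝ (⊤ : ℕ∞) g) :
    ContDiff ℝ (⊤ : ℕ∞) (fun x : Fin 1 → ℝ => g (x 0)) :=
  hg.comp ((ContinuousLinearMap.proj (R := ℝ) (φ := fun _ : Fin 1 => ℝ) 0).contDiff)

lemma pderiv_iter_comp (g : ℝ → ℝ) (hg : ContDiff ℝ (⊤ : ℕ∞) g) (n : ℕ) :
    (pderivOp (0 : Fin 1))^[n] (fun x => g (x 0)) = fun x => deriv^[n] g (x 0) := by
  induction n with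
  | zero => rfl
  | succ n ih =>
    rw [Function.iterate_succ_apply', ih, Function.iterate_succ_apply']
    refine pderiv_comp _ ?_
    have := ((hg.of_le (by simp)).iterate_deriv n)
    exact this.differentiable (by simp)

lemma mderiv_comp (g : ℝ → ℝ) (hg : ContDiff ℝ (⊤ : ℕ∞) g) (β : Fin 1 → ℕ) :
    mderiv β (fun x => g (x 0)) = fun x => deriv^[β 0] g (x 0) := by
  have : mderiv β (fun x : Fin 1 → ℝ => g (x 0))
      = (pderivOp (0:Fin 1))^[β 0] (fun x => g (x 0)) := rfl
  rw [this, pderiv_iter_comp g hg]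

lemma mpow_one (x : Fin 1 → ℝ) (α : Fin 1 → ℕ) : mpow x α = x 0 ^ α 0 :=
  Fin.prod_univ_one _
lemma msize_one (α : Fin 1 → ℕ) : msize α = α 0 := Fin.sum_univ_one _
lemma core_bound {Mk Ml : ℕ → ℝ} (hMk0 : Mk 0 = 1)
    {H B h : ℝ} (hH : 0 < H) (hB : 0 < B) (hh : 0 < h)
    (hbnd : ∀ p q : ℕ, (p:ℝ)^((p:ℝ)/2) * Mk q ≤ B * (h/(6*H))^p * H^(p+q) * Ml (p+q))
    (hMlnn : ∀ p, 0 ≤ Ml p)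
    {a E : ℝ} (ha : 0 ≤ a) (hE1 : 1 ≤ E)
    (hEdom : ∀ n : ℕ, (6*H/h*a)^n ≤ E * Mk n) :
    seqBound Ml h (3*B*E) (fun x : Fin 1 → ℝ => gfun a (x 0)) := by
  intro α β x
  rw [mderiv_comp (gfun a) (gfun_smooth a) β, mpow_one, msize_one, msize_one]
  set m := α 0
  set n := β 0
  set t := x 0
  refine le_trans (master_bound ha m n t) ?_
  -- Term 2 : 2 * 6^(m+n) * (m+n)^((m+n)/2) ≤ 2*B*h^(m+n)*Ml (m+n)
  have hbnd2 := hbnd (m+n) 0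
  rw [hMk0, mul_one, Nat.add_zero] at hbnd2
  have hfac2 : (6:ℝ)^(m+n) * (B * (h/(6*H))^(m+n) * H^(m+n)) = B * h^(m+n) := by
    rw [div_pow]
    field_simp
    ring
  have t2 : (6:ℝ)^(m+n) * (2 * ((m+n:ℕ):ℝ)^(((m+n:ℕ):ℝ)/2)) ≤ 2 * (B * h^(m+n) * Ml (m+n)) := by
    have step := mul_le_mul_of_nonneg_left hbnd2 (show (0:ℝ) ≤ 6^(m+n) by positivity)
    calc (6:ℝ)^(m+n) * (2 * ((m+n:ℕ):ℝ)^(((m+n:ℕ):ℝ)/2))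
        = 2 * ((6:ℝ)^(m+n) * ((m+n:ℕ):ℝ)^(((m+n:ℕ):ℝ)/2)) := by ring
      _ ≤ 2 * ((6:ℝ)^(m+n) * (B * (h/(6*H))^(m+n) * H^(m+n) * Ml (m+n))) := by
          apply mul_le_mul_of_nonneg_left _ (by norm_num)
          exact step
      _ = 2 * ((6:ℝ)^(m+n) * (B * (h/(6*H))^(m+n) * H^(m+n)) * Ml (m+n)) := by ring
      _ = 2 * (B * h^(m+n) * Ml (m+n)) := by rw [hfac2]
  -- Term 1 : 6^(m+n) * a^n * m^(m/2) ≤ B*E*h^(m+n)*Ml (m+n)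
  have hτ : (0:ℝ) < 6*H/h := by positivity
  have t1 : (6:ℝ)^(m+n) * (a^n * (m:ℝ)^((m:ℝ)/2)) ≤ B * E * (h^(m+n) * Ml (m+n)) := by
    have hu1 : (6*H/h*a)^n * (m:ℝ)^((m:ℝ)/2) ≤ E * Mk n * (m:ℝ)^((m:ℝ)/2) :=
      mul_le_mul_of_nonneg_right (hEdom n) (by positivity)
    have hu2 : E * ((m:ℝ)^((m:ℝ)/2) * Mk n) ≤ E * (B * (h/(6*H))^m * H^(m+n) * Ml (m+n)) :=
      mul_le_mul_of_nonneg_left (hbnd m n) (by linarith)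
    have hu3 : (6*H/h*a)^n * (m:ℝ)^((m:ℝ)/2) ≤ E * (B * (h/(6*H))^m * H^(m+n) * Ml (m+n)) := by
      calc (6*H/h*a)^n * (m:ℝ)^((m:ℝ)/2) ≤ E * Mk n * (m:ℝ)^((m:ℝ)/2) := hu1
        _ = E * ((m:ℝ)^((m:ℝ)/2) * Mk n) := by ring
        _ ≤ E * (B * (h/(6*H))^m * H^(m+n) * Ml (m+n)) := hu2
    -- multiply the goal by (6H/h)^n > 0
    have hpow : (0:ℝ) < (6*H/h)^n := by positivity
    rw [← mul_le_mul_iff_left₀ hpow]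
    have hLHS : (6:ℝ)^(m+n) * (a^n * (m:ℝ)^((m:ℝ)/2)) * (6*H/h)^n
        = (6:ℝ)^(m+n) * ((6*H/h*a)^n * (m:ℝ)^((m:ℝ)/2)) := by
      rw [mul_pow]; ring
    have hfac1 : (6:ℝ)^(m+n) * (B * (h/(6*H))^m * H^(m+n)) = B * h^(m+n) * (6*H/h)^n := by
      rw [div_pow, div_pow]
      field_simp
      ring
    calc (6:ℝ)^(m+n) * (a^n * (m:ℝ)^((m:ℝ)/2)) * (6*H/h)^n
        = (6:ℝ)^(m+n) * ((6*H/h*a)^n * (m:ℝ)^((m:ℝ)/2)) := hLHS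
      _ ≤ (6:ℝ)^(m+n) * (E * (B * (h/(6*H))^m * H^(m+n) * Ml (m+n))) := by
          apply mul_le_mul_of_nonneg_left hu3 (by positivity)
      _ = E * ((6:ℝ)^(m+n) * (B * (h/(6*H))^m * H^(m+n))) * Ml (m+n) := by ring
      _ = E * (B * h^(m+n) * (6*H/h)^n) * Ml (m+n) := by rw [hfac1]
      _ = B * E * (h^(m+n) * Ml (m+n)) * (6*H/h)^n := by ring
  have hBE : B ≤ B * E := by nlinarith
  have hMl : (0:ℝ) ≤ h^(m+n) * Ml (m+n) := by
    have := hMlnn (m+n)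
    positivity
  calc 6^(m+n) * (a^n * (m:ℝ)^((m:ℝ)/2) + 2*((m+n:ℕ):ℝ)^(((m+n:ℕ):ℝ)/2))
      = (6:ℝ)^(m+n) * (a^n * (m:ℝ)^((m:ℝ)/2))
        + (6:ℝ)^(m+n) * (2 * ((m+n:ℕ):ℝ)^(((m+n:ℕ):ℝ)/2)) := by ring
    _ ≤ B * E * (h^(m+n) * Ml (m+n)) + 2 * (B * h^(m+n) * Ml (m+n)) := add_le_add t1 t2
    _ ≤ B * E * (h^(m+n) * Ml (m+n)) + 2 * (B * E * (h^(m+n) * Ml (m+n))) := by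
        have := mul_le_mul_of_nonneg_right hBE hMl
        nlinarith [hMl, hBE]
    _ = 3*B*E * h^(m+n) * Ml (m+n) := by ring

lemma gfun_memB (M : ℝ → ℕ → ℝ) (hLC : StdLogConvex M) (h12 : cond12L2BMat M)
    {a : ℝ} (ha : 0 ≤ a) :
    (fun x : Fin 1 → ℝ => gfun a (x 0)) ∈ SBeurlingMat M 1 := by
  intro l hl
  refine ⟨comp_smooth _ (gfun_smooth a), ?_⟩
  intro h hh
  obtain ⟨k, hkpos, hkle, H, hH, h12'⟩ := h12 l hl
  obtain ⟨B, hB, hbnd⟩ := h12' (h/(6*H)) (by positivity)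
  obtain ⟨E, hE1, hEdom⟩ := (hLC k hkpos).geom_dom (show 0 ≤ 6*H/h*a by positivity)
  refine ⟨3*B*E, by nlinarith, ?_⟩
  exact core_bound (hLC k hkpos).norm0 hH hB hh hbnd
    (fun p => le_of_lt ((hLC l hl).pos p)) ha hE1 hEdom
end AuxGS
/-- Theorem `Gelfand-inclusionbeurlingmatrix`: for weight matrices `𝓜, 𝓝`,
`𝓜(⪯)𝓝` implies `S_(𝓜)(ℝ^d) ⊆ S_(𝓝)(ℝ^d)` with continuous inclusion for every `d`;
conversely, if both matrices are standard log-convex with (12L2B) and (M2')_B and the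
continuous inclusion holds in dimension `1`, then `𝓜(⪯)𝓝`. -/
theorem beurling_inclusion_characterization_weight_matrices (M N : ℝ → ℕ → ℝ)
    (hM : IsWeightMatrix M) (hN : IsWeightMatrix N) :
    (matPreceqB M N →
      ∀ d : ℕ, 0 < d → SBeurlingMat M d ⊆ SBeurlingMat N d ∧ contIncBMat M N d) ∧
    (StdLogConvex M → StdLogConvex N →
      cond12L2BMat M → cond12L2BMat N → condM2'BMat M → condM2'BMat N →
      (SBeurlingMat M 1 ⊆ SBeurlingMat N 1 ∧ contIncBMat M N 1) → matPreceqB M N) := by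
  constructor
  · -- Forward direction
    intro hpre d _
    constructor
    · intro f hf l hl
      obtain ⟨k, hk, C0, hC0, hC0le⟩ := hpre l hl
      have hC0pos : (0:ℝ) < C0 := lt_of_lt_of_le one_pos hC0
      obtain ⟨hsm, hbd⟩ := hf k hk
      refine ⟨hsm, ?_⟩
      intro h hh
      obtain ⟨C, hC, hb⟩ := hbd (h/C0) (by positivity)
      refine ⟨C, hC, ?_⟩
      intro α β x
      have hkey : ∀ s : ℕ, (h/C0)^s * M k s ≤ h^s * N l s := by
        intro s
        have h1 : (h/C0)^s * M k s ≤ (h/C0)^s * (C0^s * N l s) :=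
          mul_le_mul_of_nonneg_left (hC0le s) (by positivity)
        calc (h/C0)^s * M k s ≤ (h/C0)^s * (C0^s * N l s) := h1
          _ = h^s * N l s := by
              rw [div_pow]
              field_simp
      calc |mpow x α * mderiv β f x| ≤ C * (h/C0)^(msize α + msize β) * M k (msize α + msize β) :=
            hb α β x
        _ = C * ((h/C0)^(msize α + msize β) * M k (msize α + msize β)) := by ring
        _ ≤ C * (h^(msize α + msize β) * N l (msize α + msize β)) :=
            mul_le_mul_of_nonneg_left (hkey _) (by positivity)
        _ = C * h^(msize α + msize β) * N l (msize α + msize β) := by ring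
    · intro l hl h hh
      obtain ⟨k, hk, C0, hC0, hC0le⟩ := hpre l hl
      have hC0pos : (0:ℝ) < C0 := lt_of_lt_of_le one_pos hC0
      refine ⟨k, hk, h/C0, by positivity, 1, le_refl 1, ?_⟩
      intro f _ D hD hsb α β x
      have hkey : ∀ s : ℕ, (h/C0)^s * M k s ≤ h^s * N l s := by
        intro s
        have h1 : (h/C0)^s * M k s ≤ (h/C0)^s * (C0^s * N l s) :=
          mul_le_mul_of_nonneg_left (hC0le s) (by positivity)
        calc (h/C0)^s * M k s ≤ (h/C0)^s * (C0^s * N l s) := h1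
          _ = h^s * N l s := by
              rw [div_pow]
              field_simp
      calc |mpow x α * mderiv β f x| ≤ D * (h/C0)^(msize α + msize β) * M k (msize α + msize β) :=
            hsb α β x
        _ = D * ((h/C0)^(msize α + msize β) * M k (msize α + msize β)) := by ring
        _ ≤ D * (h^(msize α + msize β) * N l (msize α + msize β)) :=
            mul_le_mul_of_nonneg_left (hkey _) hD
        _ = 1 * D * h^(msize α + msize β) * N l (msize α + msize β) := by ring
  · -- Converse direction
    intro hLCM hLCN h12M _ hM2M _ hinc
    obtain ⟨_, hcont⟩ := hinc
    intro lam hlam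
    obtain ⟨κ₀, hκ₀pos, h', hh', C₁, hC₁, hcont1⟩ := hcont lam hlam 1 one_pos
    obtain ⟨κ₁, hκ₁pos, hκ₁le, H₀, hH₀, h12⟩ := h12M κ₀ hκ₀pos
    obtain ⟨B₀, hB₀, hbnd⟩ := h12 (h'/(6*H₀)) (by positivity)
    obtain ⟨κ₂, hκ₂pos, hκ₂le, A, hA, hM2⟩ := hM2M κ₁ hκ₁pos
    set τ := 6*H₀/h' with hτdef
    have hτpos : 0 < τ := by positivity
    set K := 3*C₁*B₀ with hKdef
    have hKpos : 0 < K := by nlinarith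
    -- key estimate at even indices
    have key : ∀ p : ℕ, M κ₁ (2*p) ≤ K * τ^(2*p) * N lam (2*p) := by
      intro p
      have hM2ppos := (hLCM κ₁ hκ₁pos).pos (2*p)
      have hM2p1pos := (hLCM κ₁ hκ₁pos).pos (2*p+1)
      set b := M κ₁ (2*p+1) / M κ₁ (2*p) with hbdef
      have hbpos : 0 < b := div_pos hM2p1pos hM2ppos
      set a := b/τ with hadef
      have hapos : 0 < a := by positivity
      have hτa : 6*H₀/h'*a = b := by
        rw [hadef, hτdef]
        field_simp
      set Ep := b^(2*p) / M κ₁ (2*p) with hEpdef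
      have hμ := (hLCM κ₁ hκ₁pos).mu_bound (2*p)
      have hEdom : ∀ n : ℕ, (6*H₀/h'*a)^n ≤ Ep * M κ₁ n := by
        intro n
        rw [hτa, hEpdef, div_mul_eq_mul_div, le_div_iff₀ hM2ppos]
        have := hμ n
        linarith [hμ n]
      have hEp1 : 1 ≤ Ep := by
        have h0 := hμ 0
        rw [pow_zero, one_mul, (hLCM κ₁ hκ₁pos).norm0, mul_one] at h0
        rw [hEpdef, le_div_iff₀ hM2ppos, one_mul]
        exact h0
      have hmem := gfun_memB M hLCM h12M (le_of_lt hapos)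
      have hD : seqBound (M κ₀) h' (3*B₀*Ep) (fun x : Fin 1 → ℝ => gfun a (x 0)) :=
        core_bound (hLCM κ₁ hκ₁pos).norm0 hH₀ hB₀ hh' hbnd
          (fun q => le_of_lt ((hLCM κ₀ hκ₀pos).pos q)) (le_of_lt hapos) hEp1 hEdom
      have hDnn : (0:ℝ) ≤ 3*B₀*Ep := by nlinarith
      have hN' := hcont1 _ hmem _ hDnn hD
      have hext := hN' (fun _ => 0) (fun _ => 2*p) (fun _ => 0)
      rw [mderiv_comp (gfun a) (gfun_smooth a), mpow_one, msize_one, msize_one] at hext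
      simp only [pow_zero, one_mul, one_pow, Nat.zero_add, mul_one] at hext
      have hlow := gfun_lower (le_of_lt hapos) p
      have hcomb : a^(2*p) ≤ C₁ * (3*B₀*Ep) * N lam (2*p) := le_trans hlow hext
      -- unfold a and Ep, cancel
      rw [hadef, div_pow] at hcomb
      have hstep : b^(2*p) ≤ C₁ * (3*B₀*Ep) * N lam (2*p) * τ^(2*p) :=
        (div_le_iff₀ (by positivity)).mp hcomb
      have hstep2 : b^(2*p) * M κ₁ (2*p) ≤ C₁ * (3*B₀*Ep) * N lam (2*p) * τ^(2*p) * M κ₁ (2*p) :=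
        mul_le_mul_of_nonneg_right hstep (le_of_lt hM2ppos)
      have hEpM : Ep * M κ₁ (2*p) = b^(2*p) := by
        rw [hEpdef]
        field_simp
      have hRHS : C₁ * (3*B₀*Ep) * N lam (2*p) * τ^(2*p) * M κ₁ (2*p)
          = b^(2*p) * (K * τ^(2*p) * N lam (2*p)) := by
        rw [hKdef, ← hEpM]
        ring
      rw [hRHS] at hstep2
      exact le_of_mul_le_mul_left (by linarith [hstep2]) (by positivity : (0:ℝ) < b^(2*p))
    -- assemble seqPreceq (M κ₂) (N lam)
    refine ⟨κ₂, hκ₂pos, ?_⟩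
    set τ' := max τ 1 with hτ'def
    set K' := max K 1 with hK'def
    have hτ'1 : (1:ℝ) ≤ τ' := le_max_right _ _
    have hK'1 : (1:ℝ) ≤ K' := le_max_right _ _
    have hττ' : τ ≤ τ' := le_max_left _ _
    have hKK' : K ≤ K' := le_max_left _ _
    have hCfin1 : (1:ℝ) ≤ A * τ' * K' := by
      have h1' : (1:ℝ) ≤ A * τ' := le_trans hA (le_mul_of_one_le_right (by linarith) hτ'1)
      exact le_trans h1' (le_mul_of_one_le_right (by linarith) hK'1)
    refine ⟨A * τ' * K', hCfin1, ?_⟩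
    intro r
    rcases Nat.eq_zero_or_pos r with hr0 | hr1
    · subst hr0
      rw [(hLCM κ₂ hκ₂pos).norm0, pow_zero, one_mul, (hLCN lam hlam).norm0]
    have hNnn : (0:ℝ) ≤ N lam r := le_of_lt ((hLCN lam hlam).pos r)
    have hA1r : (1:ℝ) ≤ A^r := by
      have := pow_le_pow_left₀ (by norm_num : (0:ℝ) ≤ 1) hA r
      rwa [one_pow] at this
    have hKr : K ≤ K'^r := by
      refine le_trans hKK' ?_
      calc K' = K'^1 := (pow_one K').symm
        _ ≤ K'^r := pow_le_pow_right₀ hK'1 hr1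
    rcases Nat.even_or_odd r with ⟨q, hq⟩ | ⟨q, hq⟩
    · -- even case : r = q + q
      have hr2 : r = 2*q := by omega
      have h1 : M κ₂ r ≤ M κ₁ r := hM.2 κ₂ κ₁ hκ₂pos hκ₂le r
      have h2 : M κ₁ r ≤ K * τ^r * N lam r := by rw [hr2]; exact key q
      have h3 : K * τ^r ≤ (A * τ' * K')^r := by
        have e2 : τ^r ≤ τ'^r := pow_le_pow_left₀ (le_of_lt hτpos) hττ' r
        calc K * τ^r ≤ K'^r * τ'^r :=
              mul_le_mul hKr e2 (by positivity) (by positivity)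
          _ ≤ A^r * (K'^r * τ'^r) := le_mul_of_one_le_left (by positivity) hA1r
          _ = (A * τ' * K')^r := by rw [mul_pow, mul_pow]; ring
      calc M κ₂ r ≤ K * τ^r * N lam r := le_trans h1 h2
        _ ≤ (A*τ'*K')^r * N lam r := mul_le_mul_of_nonneg_right h3 hNnn
    · -- odd case : r = 2q+1
      have h1 : M κ₂ r ≤ A^r * M κ₁ (2*q) := by rw [hq]; exact hM2 (2*q)
      have h2 := key q
      have hNmono : N lam (2*q) ≤ N lam r := by rw [hq]; exact (hLCN lam hlam).mono (2*q)
      have hN2qnn : (0:ℝ) ≤ N lam (2*q) := le_of_lt ((hLCN lam hlam).pos (2*q))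
      have s2 : τ^(2*q) ≤ τ'^r :=
        le_trans (pow_le_pow_left₀ (le_of_lt hτpos) hττ' (2*q))
          (pow_le_pow_right₀ hτ'1 (by omega))
      have h3 : K * τ^(2*q) * N lam (2*q) ≤ K'^r * τ'^r * N lam r := by
        apply mul_le_mul _ hNmono hN2qnn (by positivity)
        exact mul_le_mul hKr s2 (by positivity) (by positivity)
      calc M κ₂ r ≤ A^r * M κ₁ (2*q) := h1
        _ ≤ A^r * (K * τ^(2*q) * N lam (2*q)) :=
            mul_le_mul_of_nonneg_left (le_trans h2 (le_refl _)) (by positivity)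
        _ ≤ A^r * (K'^r * τ'^r * N lam r) := mul_le_mul_of_nonneg_left h3 (by positivity)
        _ = (A*τ'*K')^r * N lam r := by rw [mul_pow, mul_pow]; ring
end

section
/- Let M=(M_p)_{p∈ℕ_0} and N=(N_p)_{p∈ℕ_0} be sequences in LC which both satisfy derivation closedness (M2') and the single-sequence condition (12L2R). Then M⪯N if and only if S_{{M}}(ℝ^d) ⊆ S_{{N}}(ℝ^d) for all dimensions d∈ℕ. The implication from M⪯N to the inclusions holds for arbitrary sequences of positive reals, and for the converse only the inclusion in dimension d=1 is required. -/
open Filter Asymptotics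

/-! ### Auxiliary machinery for the proof -/

namespace GWAux

noncomputable section
open Real

/-- The Gaussian `e^{-x²}`. -/
def gauss : ℝ → ℝ := fun x => Real.exp (-(x ^ 2))

lemma contDiff_gauss : ContDiff ℝ (⊤ : ℕ∞) gauss :=
  Real.contDiff_exp.comp (contDiff_id.pow 2).neg

lemma gauss_pos (x : ℝ) : 0 < gauss x := Real.exp_pos _

lemma gauss_hasDerivAt (x : ℝ) : HasDerivAt gauss (-2 * x * gauss x) x := by
  have h : HasDerivAt (fun y : ℝ => -(y ^ 2)) (-(2 * x)) x := by
    simpa using ((hasDerivAt_pow 2 x).fun_neg)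
  have h2 : HasDerivAt gauss (Real.exp (-(x^2)) * -(2*x)) x := (Real.hasDerivAt_exp (-(x^2))).comp x h
  convert h2 using 1
  show -2 * x * Real.exp (-(x^2)) = _
  ring

lemma diff_itg (n : ℕ) : Differentiable ℝ (iteratedDeriv n gauss) :=
  contDiff_gauss.differentiable_iteratedDeriv n (by exact_mod_cast lt_top_iff_ne_top.2 (by simp))

lemma hd_itg (n : ℕ) (x : ℝ) :
    HasDerivAt (iteratedDeriv n gauss) (iteratedDeriv (n+1) gauss x) x := by
  rw [iteratedDeriv_succ]
  exact ((diff_itg n) x).hasDerivAt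

lemma itg_one (x : ℝ) : iteratedDeriv 1 gauss x = -2 * x * gauss x := by
  rw [iteratedDeriv_one]
  exact (gauss_hasDerivAt x).deriv

lemma gauss_rec : ∀ (b : ℕ) (x : ℝ), iteratedDeriv (b+1) gauss x
    = -2 * x * iteratedDeriv b gauss x - 2 * (b:ℝ) * iteratedDeriv (b-1) gauss x := by
  intro b
  induction b with
  | zero => intro x; simpa [iteratedDeriv_zero] using itg_one x
  | succ c ih =>
    intro x
    have hfun : iteratedDeriv (c+1) gauss
        = fun y => -2 * y * iteratedDeriv c gauss y - 2 * (c:ℝ) * iteratedDeriv (c-1) gauss y :=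
      funext ih
    have hA : HasDerivAt (fun y => -2 * y * iteratedDeriv c gauss y)
        (-2 * iteratedDeriv c gauss x + -2 * x * iteratedDeriv (c+1) gauss x) x := by
      simpa using (((hasDerivAt_id x).const_mul (-2:ℝ)).fun_mul (hd_itg c x))
    have hB : HasDerivAt (fun y => 2 * (c:ℝ) * iteratedDeriv (c-1) gauss y)
        (2 * (c:ℝ) * iteratedDeriv ((c-1)+1) gauss x) x := (hd_itg (c-1) x).const_mul _
    have hAB := (hA.fun_sub hB).deriv
    rw [iteratedDeriv_succ]
    conv_lhs => rw [hfun]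
    rw [hAB]
    rcases Nat.eq_zero_or_pos c with rfl | hc
    · push_cast; ring_nf
    · rw [Nat.sub_add_cancel hc]
      push_cast; ring_nf

/-- `φ(s) = s^{s/2}`. -/
def phi (s : ℕ) : ℝ := (s : ℝ) ^ ((s : ℝ) / 2)

lemma phi_nonneg (s : ℕ) : 0 ≤ phi s := Real.rpow_nonneg (by positivity) _

lemma pow_le_pow_mul_exp (a : ℕ) (t : ℝ) (ht : 0 ≤ t) : t ^ a ≤ (a : ℝ) ^ a * Real.exp t := by
  rcases Nat.eq_zero_or_pos a with rfl | ha
  · simpa using Real.one_le_exp ht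
  · have ha' : (0:ℝ) < a := by exact_mod_cast ha
    have h2 : t / a ≤ Real.exp (t / a) := by
      have := Real.add_one_le_exp (t / a); linarith
    have h1 : t ≤ (a : ℝ) * Real.exp (t / a) := by
      calc t = a * (t / a) := by field_simp
        _ ≤ a * Real.exp (t / a) := mul_le_mul_of_nonneg_left h2 (le_of_lt ha')
    calc t ^ a ≤ ((a : ℝ) * Real.exp (t / a)) ^ a := pow_le_pow_left₀ ht h1 a
      _ = (a : ℝ) ^ a * Real.exp t := by
          rw [mul_pow, ← Real.exp_nat_mul]
          congr 2
          field_simp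

lemma abs_pow_mul_gauss_le (a : ℕ) (x : ℝ) : |x| ^ a * gauss x ≤ phi a := by
  have h0 : (0:ℝ) ≤ |x| ^ a * gauss x :=
    mul_nonneg (pow_nonneg (abs_nonneg x) a) (gauss_pos x).le
  have hsq : (|x| ^ a * gauss x) ^ 2 ≤ (a : ℝ) ^ a := by
    have h1 : (x ^ 2) ^ a ≤ (a : ℝ) ^ a * Real.exp (x ^ 2) :=
      pow_le_pow_mul_exp a (x ^ 2) (sq_nonneg x)
    have h2 : (|x| ^ a * gauss x) ^ 2 = (x ^ 2) ^ a * Real.exp (-(x^2)) ^ 2 := by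
      rw [mul_pow]
      congr 1
      rw [← pow_mul, mul_comm a 2, pow_mul, sq_abs]
    rw [h2]
    calc (x ^ 2) ^ a * Real.exp (-(x^2)) ^ 2
        ≤ ((a:ℝ)^a * Real.exp (x^2)) * Real.exp (-(x^2)) ^ 2 :=
          mul_le_mul_of_nonneg_right h1 (by positivity)
      _ = (a:ℝ)^a * (Real.exp (x^2) * (Real.exp (-(x^2)) * Real.exp (-(x^2)))) := by ring
      _ = (a:ℝ)^a * Real.exp (-(x^2)) := by
          rw [← Real.exp_add, ← Real.exp_add]; ring_nf
      _ ≤ (a:ℝ)^a := by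
          have h4 : Real.exp (-(x^2)) ≤ 1 := Real.exp_le_one_iff.2 (neg_nonpos.2 (sq_nonneg x))
          have h5 : (0:ℝ) ≤ (a:ℝ)^a := pow_nonneg (Nat.cast_nonneg a) a
          nlinarith [Real.exp_pos (-(x^2))]
  have hle : |x| ^ a * gauss x ≤ Real.sqrt ((a:ℝ)^a) := by
    rw [show Real.sqrt ((a:ℝ)^a) = ((a:ℝ)^a) ^ ((1:ℝ)/2) from Real.sqrt_eq_rpow _]
    calc |x| ^ a * gauss x = ((|x| ^ a * gauss x) ^ 2) ^ ((1:ℝ)/2) := by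
          rw [← Real.rpow_natCast (|x| ^ a * gauss x) 2, ← Real.rpow_mul h0]
          norm_num
      _ ≤ ((a:ℝ)^a) ^ ((1:ℝ)/2) := Real.rpow_le_rpow (by positivity) hsq (by norm_num)
  refine hle.trans ?_
  rw [Real.sqrt_eq_rpow, phi, ← Real.rpow_natCast (a:ℝ) a, ← Real.rpow_mul (Nat.cast_nonneg a)]
  ring_nf
  exact le_refl _

lemma phi_step (c a : ℕ) : ((c:ℝ)+1) * phi (a + c) ≤ phi (a + c + 2) := by
  have hs : (0:ℝ) ≤ (a + c : ℕ) := Nat.cast_nonneg _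
  have h1 : phi (a+c) ≤ ((a+c+2 : ℕ):ℝ) ^ (((a+c:ℕ):ℝ)/2) := by
    apply Real.rpow_le_rpow hs (by push_cast; linarith) (by positivity)
  have h2 : ((c:ℝ)+1) ≤ ((a+c+2 : ℕ):ℝ) := by push_cast; linarith [Nat.cast_nonneg (α := ℝ) a]
  calc ((c:ℝ)+1) * phi (a + c) ≤ ((a+c+2 : ℕ):ℝ) * ((a+c+2 : ℕ):ℝ) ^ (((a+c:ℕ):ℝ)/2) := by
        apply mul_le_mul h2 h1 (phi_nonneg _) (Nat.cast_nonneg _)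
    _ = phi (a + c + 2) := by
        rw [phi]
        rw [show ((a+c+2 : ℕ):ℝ) * ((a+c+2 : ℕ):ℝ) ^ (((a+c:ℕ):ℝ)/2)
            = ((a+c+2 : ℕ):ℝ) ^ (1:ℝ) * ((a+c+2 : ℕ):ℝ) ^ (((a+c:ℕ):ℝ)/2) from by
          rw [Real.rpow_one]]
        rw [← Real.rpow_add (by positivity)]
        congr 1
        push_cast; ring

lemma gauss_bound : ∀ (b a : ℕ) (x : ℝ),
    |x| ^ a * |iteratedDeriv b gauss x| ≤ 3 ^ b * phi (a + b) := by
  intro b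
  induction b using Nat.strong_induction_on with
  | _ b ih =>
    match b with
    | 0 =>
      intro a x
      simp only [iteratedDeriv_zero, pow_zero, one_mul, Nat.add_zero]
      rw [abs_of_pos (gauss_pos x)]
      exact abs_pow_mul_gauss_le a x
    | 1 =>
      intro a x
      have h := abs_pow_mul_gauss_le (a+1) x
      have heq : |x| ^ a * |iteratedDeriv 1 gauss x| = 2 * (|x| ^ (a+1) * gauss x) := by
        rw [itg_one, abs_mul, abs_mul, abs_of_pos (gauss_pos x)]
        norm_num
        rw [pow_succ]
        ring
      rw [heq]
      calc 2 * (|x| ^ (a+1) * gauss x) ≤ 2 * phi (a+1) := by linarith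
        _ ≤ 3 ^ 1 * phi (a + 1) := by nlinarith [phi_nonneg (a+1)]
    | (c+2) =>
      intro a x
      have h1 := ih (c+1) (by omega) (a+1) x
      have h2 := ih c (by omega) a x
      have hrec := gauss_rec (c+1) x
      rw [show c + 1 - 1 = c from rfl] at hrec
      push_cast at hrec
      have habs : |iteratedDeriv (c+2) gauss x|
          ≤ 2 * |x| * |iteratedDeriv (c+1) gauss x| + 2 * ((c:ℝ)+1) * |iteratedDeriv c gauss x| := by
        rw [show c + 2 = (c+1)+1 from rfl, hrec]
        calc |(-2 * x * iteratedDeriv (c+1) gauss x - 2 * ((c:ℝ)+1) * iteratedDeriv c gauss x)|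
            ≤ |(-2 * x * iteratedDeriv (c+1) gauss x)| + |2 * ((c:ℝ)+1) * iteratedDeriv c gauss x| :=
              abs_sub _ _
          _ = 2 * |x| * |iteratedDeriv (c+1) gauss x| + 2 * ((c:ℝ)+1) * |iteratedDeriv c gauss x| := by
              rw [abs_mul, abs_mul, abs_mul, abs_mul]
              rw [abs_of_nonneg (by positivity : (0:ℝ) ≤ (c:ℝ)+1)]
              norm_num
      have hxnn : (0:ℝ) ≤ |x| ^ a := pow_nonneg (abs_nonneg x) a
      have hmain : |x| ^ a * |iteratedDeriv (c+2) gauss x|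
          ≤ 2 * (|x| ^ (a+1) * |iteratedDeriv (c+1) gauss x|)
            + 2 * ((c:ℝ)+1) * (|x| ^ a * |iteratedDeriv c gauss x|) := by
        have hh := mul_le_mul_of_nonneg_left habs hxnn
        calc |x| ^ a * |iteratedDeriv (c+2) gauss x| ≤ _ := hh
          _ = 2 * (|x| ^ (a+1) * |iteratedDeriv (c+1) gauss x|)
            + 2 * ((c:ℝ)+1) * (|x| ^ a * |iteratedDeriv c gauss x|) := by
              rw [pow_succ]; ring
      have hstep : ((c:ℝ)+1) * phi (a + c) ≤ phi (a + (c+2)) := by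
        have hps := phi_step c a
        rwa [show a + c + 2 = a + (c + 2) from by omega] at hps
      have e1 : 2 * (|x| ^ (a+1) * |iteratedDeriv (c+1) gauss x|)
          ≤ 2 * (3 ^ (c+1) * phi (a + (c+2))) := by
        rw [show a + (c+2) = (a+1) + (c+1) from by omega]
        linarith
      have e2 : 2 * ((c:ℝ)+1) * (|x| ^ a * |iteratedDeriv c gauss x|)
          ≤ 2 * (3 ^ c * phi (a + (c+2))) := by
        have e2a : 2 * ((c:ℝ)+1) * (|x| ^ a * |iteratedDeriv c gauss x|)
            ≤ 2 * ((c:ℝ)+1) * (3 ^ c * phi (a + c)) := by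
          have : (0:ℝ) ≤ 2 * ((c:ℝ)+1) := by positivity
          exact mul_le_mul_of_nonneg_left h2 this
        have e2b : 2 * ((c:ℝ)+1) * (3 ^ c * phi (a + c))
            = 2 * (3^c * (((c:ℝ)+1) * phi (a+c))) := by ring
        have e2c : 2 * (3^c * (((c:ℝ)+1) * phi (a+c))) ≤ 2 * (3^c * phi (a + (c+2))) := by
          have : (3:ℝ)^c * (((c:ℝ)+1) * phi (a+c)) ≤ 3^c * phi (a + (c+2)) :=
            mul_le_mul_of_nonneg_left hstep (by positivity)
          linarith
        linarith [e2a, e2b ▸ e2c]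
      calc |x| ^ a * |iteratedDeriv (c+2) gauss x|
          ≤ 2 * (3 ^ (c+1) * phi (a + (c+2))) + 2 * (3 ^ c * phi (a + (c+2))) := by
            linarith
        _ ≤ 3 ^ (c+2) * phi (a + (c+2)) := by
            have hp := phi_nonneg (a + (c+2))
            have h3 : (0:ℝ) < 3 ^ c := by positivity
            have e3 : (3:ℝ)^(c+1) = 3*3^c := by ring
            have e4 : (3:ℝ)^(c+2) = 9*3^c := by ring
            nlinarith

/-! ### Sequence lemmas -/

variable {M : ℕ → ℝ}

/-- Ratios `m_p = M_{p+1}/M_p`. -/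
def rat (M : ℕ → ℝ) (p : ℕ) : ℝ := M (p+1) / M p

lemma rat_pos (hM : IsLC M) (p : ℕ) : 0 < rat M p := div_pos (hM.pos _) (hM.pos _)

lemma rat_mono (hM : IsLC M) : Monotone (rat M) := by
  apply monotone_nat_of_le_succ
  intro p
  rw [rat, rat, div_le_div_iff₀ (hM.pos p) (hM.pos (p+1))]
  have := hM.logConvex p
  nlinarith [hM.pos p, hM.pos (p+1), hM.pos (p+2)]

lemma M_mul_rat_pow_le (hM : IsLC M) : ∀ j k, j ≤ k → M j * rat M j ^ (k - j) ≤ M k := by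
  intro j k
  induction k with
  | zero => intro h; interval_cases j; simp
  | succ k ihk =>
    intro h
    rcases Nat.lt_or_ge j (k+1) with hlt | hge
    · have hjk : j ≤ k := by omega
      have step : M k * rat M j ≤ M (k+1) := by
        have h1 : rat M j ≤ rat M k := rat_mono hM hjk
        have h2 : M k * rat M k = M (k+1) := by
          rw [rat, mul_div_cancel₀ _ (ne_of_gt (hM.pos k))]
        calc M k * rat M j ≤ M k * rat M k := by
              exact mul_le_mul_of_nonneg_left h1 (hM.pos k).le
          _ = M (k+1) := h2
      have : M j * rat M j ^ (k + 1 - j) = (M j * rat M j ^ (k - j)) * rat M j := by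
        rw [mul_assoc, ← pow_succ]
        congr 2
        omega
      rw [this]
      calc (M j * rat M j ^ (k - j)) * rat M j ≤ M k * rat M j := by
            exact mul_le_mul_of_nonneg_right (ihk hjk) (rat_pos hM j).le
        _ ≤ M (k+1) := step
    · have : j = k+1 := by omega
      subst this
      simp

lemma M_le_mul_rat_pow (hM : IsLC M) : ∀ k j, k ≤ j → M j ≤ M k * rat M j ^ (j - k) := by
  intro k j
  induction j with
  | zero => intro h; interval_cases k; simp
  | succ j ihj =>
    intro h
    rcases Nat.lt_or_ge k (j+1) with hlt | hge
    · have hkj : k ≤ j := by omega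
      have h1 : M (j+1) = M j * rat M j := by
        rw [rat, mul_div_cancel₀ _ (ne_of_gt (hM.pos j))]
      have h2 : rat M j ≤ rat M (j+1) := rat_mono hM (Nat.le_succ j)
      have h3 : rat M j ^ (j - k) ≤ rat M (j+1) ^ (j - k) :=
        pow_le_pow_left₀ (rat_pos hM j).le h2 _
      calc M (j+1) = M j * rat M j := h1
        _ ≤ (M k * rat M j ^ (j-k)) * rat M j := by
            exact mul_le_mul_of_nonneg_right (ihj hkj) (rat_pos hM j).le
        _ ≤ (M k * rat M (j+1) ^ (j-k)) * rat M (j+1) := by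
            have hk0 := (hM.pos k).le
            exact mul_le_mul (mul_le_mul_of_nonneg_left h3 hk0) h2 (rat_pos hM j).le
              (mul_nonneg hk0 (pow_nonneg (rat_pos hM (j+1)).le _))
        _ = M k * rat M (j+1) ^ (j + 1 - k) := by
            rw [mul_assoc, ← pow_succ]
            congr 2
            omega
    · have : k = j+1 := by omega
      subst this
      simp

/-- Amplitudes `ε_p = 2^{-p} M_p / m_p^p`. -/
def eps (M : ℕ → ℝ) (p : ℕ) : ℝ := (1/2)^p * M p / rat M p ^ p

lemma eps_pos (hM : IsLC M) (p : ℕ) : 0 < eps M p := by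
  have := rat_pos hM p
  have := hM.pos p
  rw [eps]; positivity

lemma eps_mul_pow_le (hM : IsLC M) (p a : ℕ) : eps M p * rat M p ^ a ≤ (1/2)^p * M a := by
  have hr := rat_pos hM p
  have hrp : (0:ℝ) < rat M p ^ p := pow_pos hr p
  rcases le_or_gt p a with hpa | hap
  · have key := M_mul_rat_pow_le hM p a hpa
    have : eps M p * rat M p ^ a = (1/2)^p * (M p * rat M p ^ (a - p)) := by
      rw [eps]
      rw [show rat M p ^ a = rat M p ^ p * rat M p ^ (a - p) from by
        rw [← pow_add]; congr 1; omega]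
      field_simp
    rw [this]
    have h2 : (0:ℝ) < (1/2:ℝ)^p := by positivity
    exact mul_le_mul_of_nonneg_left key h2.le
  · have key := M_le_mul_rat_pow hM a p hap.le
    rw [eps, div_mul_eq_mul_div, div_le_iff₀ hrp]
    have h2 : (0:ℝ) ≤ (1/2:ℝ)^p := by positivity
    have h3 : (0:ℝ) ≤ rat M p ^ a := by positivity
    have hpow : rat M p ^ (p-a) * rat M p ^ a = rat M p ^ p := by
      rw [← pow_add]; congr 1; omega
    calc (1/2:ℝ)^p * M p * rat M p ^ a
        ≤ (1/2:ℝ)^p * (M a * rat M p ^ (p-a)) * rat M p ^ a :=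
          mul_le_mul_of_nonneg_right (mul_le_mul_of_nonneg_left key h2) h3
      _ = (1/2:ℝ)^p * M a * (rat M p ^ (p-a) * rat M p ^ a) := by ring
      _ = (1/2:ℝ)^p * M a * rat M p ^ p := by rw [hpow]

lemma eps_le (hM : IsLC M) (p : ℕ) : eps M p ≤ (1/2)^p := by
  have := eps_mul_pow_le hM p 0
  simpa [hM.norm0] using this

lemma eps_rat_pow (hM : IsLC M) (p : ℕ) : eps M p * rat M p ^ p = (1/2)^p * M p := by
  have hrp : (0:ℝ) < rat M p ^ p := pow_pos (rat_pos hM p) p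
  rw [eps, div_mul_cancel₀ _ (ne_of_gt hrp)]

/-! ### The test function and its derivatives -/

/-- `FD M b` is the `b`-th derivative of the test function `FD M 0`. -/
def FD (M : ℕ → ℝ) (b : ℕ) : ℝ → ℝ :=
  fun t => ∑' p, eps M p * iteratedDeriv b gauss (t - rat M p)

lemma FD_apply (M : ℕ → ℝ) (b : ℕ) (t : ℝ) :
    FD M b t = ∑' p, eps M p * iteratedDeriv b gauss (t - rat M p) := rfl

lemma term_bound (hM : IsLC M) (b p : ℕ) (t : ℝ) :
    |eps M p * iteratedDeriv b gauss (t - rat M p)| ≤ (1/2)^p * (3 ^ b * phi b) := by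
  have h := gauss_bound b 0 (t - rat M p)
  simp only [pow_zero, one_mul, Nat.zero_add] at h
  rw [abs_mul, abs_of_pos (eps_pos hM p)]
  calc eps M p * |iteratedDeriv b gauss (t - rat M p)| ≤ eps M p * (3^b * phi b) :=
        mul_le_mul_of_nonneg_left h (eps_pos hM p).le
    _ ≤ (1/2)^p * (3^b * phi b) := by
        apply mul_le_mul_of_nonneg_right (eps_le hM p)
        exact mul_nonneg (by positivity) (phi_nonneg b)

lemma summable_half : Summable (fun p : ℕ => ((1:ℝ)/2)^p) :=
  summable_geometric_of_lt_one (by norm_num) (by norm_num)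

lemma tsum_half : (∑' p : ℕ, ((1:ℝ)/2)^p) = 2 := by
  rw [tsum_geometric_of_lt_one (by norm_num) (by norm_num)]; norm_num

lemma summable_FD (hM : IsLC M) (b : ℕ) (t : ℝ) :
    Summable (fun p => eps M p * iteratedDeriv b gauss (t - rat M p)) := by
  apply Summable.of_norm
  apply Summable.of_nonneg_of_le (fun p => norm_nonneg _) (fun p => term_bound hM b p t)
  exact summable_half.mul_right _

lemma hasDerivAt_FD (hM : IsLC M) (b : ℕ) (t : ℝ) :
    HasDerivAt (FD M b) (FD M (b+1) t) t := by
  have hg : ∀ (p : ℕ) (y : ℝ), HasDerivAt (fun z => eps M p * iteratedDeriv b gauss (z - rat M p))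
      (eps M p * iteratedDeriv (b+1) gauss (y - rat M p)) y := by
    intro p y
    have hshift : HasDerivAt (fun s : ℝ => s - rat M p) 1 y := (hasDerivAt_id y).sub_const _
    have hcomp := (hd_itg b (y - rat M p)).comp y hshift
    have := hcomp.const_mul (eps M p)
    simpa using this
  have h := hasDerivAt_tsum (y₀ := (0:ℝ))
    (u := fun p => (1/2)^p * (3 ^ (b+1) * phi (b+1)))
    (g := fun p z => eps M p * iteratedDeriv b gauss (z - rat M p))
    (g' := fun p z => eps M p * iteratedDeriv (b+1) gauss (z - rat M p))
    (summable_half.mul_right _) hg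
    (fun p y => term_bound hM (b+1) p y) (summable_FD hM b 0) t
  exact h

lemma iteratedDeriv_FD (hM : IsLC M) (b : ℕ) : iteratedDeriv b (FD M 0) = FD M b := by
  induction b with
  | zero => rw [iteratedDeriv_zero]
  | succ b ih =>
    rw [iteratedDeriv_succ, ih]
    funext t
    exact (hasDerivAt_FD hM b t).deriv

lemma abs_pow_FD_le (hM : IsLC M) (a b : ℕ) (t : ℝ) {c : ℝ}
    (hc : ∀ p : ℕ, |t| ^ a * |eps M p * iteratedDeriv b gauss (t - rat M p)| ≤ (1/2)^p * c) :
    |t| ^ a * |FD M b t| ≤ 2 * c := by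
  have hsum := summable_FD hM b t
  have hsum2 : Summable (fun p => t ^ a * (eps M p * iteratedDeriv b gauss (t - rat M p))) :=
    hsum.mul_left _
  have habs : Summable (fun p => |t ^ a * (eps M p * iteratedDeriv b gauss (t - rat M p))|) :=
    hsum2.abs
  have h0 : |t| ^ a * |FD M b t| = |∑' p, t ^ a * (eps M p * iteratedDeriv b gauss (t - rat M p))| := by
    rw [tsum_mul_left, abs_mul, abs_pow, FD_apply]
  have hc' : ∀ p : ℕ, |t ^ a * (eps M p * iteratedDeriv b gauss (t - rat M p))| ≤ (1/2)^p * c := by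
    intro p
    rw [abs_mul, abs_pow]
    exact hc p
  have h1 : |∑' p, t ^ a * (eps M p * iteratedDeriv b gauss (t - rat M p))|
      ≤ ∑' p, |t ^ a * (eps M p * iteratedDeriv b gauss (t - rat M p))| := by
    have hn : Summable (fun p => ‖t ^ a * (eps M p * iteratedDeriv b gauss (t - rat M p))‖) := by
      simpa only [Real.norm_eq_abs] using habs
    have h1' := norm_tsum_le_tsum_norm (f := fun p : ℕ =>
      t ^ a * (eps M p * iteratedDeriv b gauss (t - rat M p))) hn
    simpa only [Real.norm_eq_abs] using h1'
  have h2 : (∑' p, |t ^ a * (eps M p * iteratedDeriv b gauss (t - rat M p))|)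
      ≤ ∑' p : ℕ, (1/2)^p * c :=
    Summable.tsum_le_tsum hc' habs (summable_half.mul_right _)
  have h3 : (∑' p : ℕ, ((1:ℝ)/2)^p * c) = 2 * c := by rw [tsum_mul_right, tsum_half]
  linarith [h0 ▸ (h1.trans h2)]

/-! ### Analyticity of the test function -/

/-- Complex version of the test function. -/
def FC (M : ℕ → ℝ) : ℂ → ℂ :=
  fun z => ∑' p, (eps M p : ℂ) * Complex.exp (-((z - (rat M p : ℂ)) ^ 2))

lemma FC_term_norm (hM : IsLC M) (p : ℕ) (z : ℂ) :
    ‖(eps M p : ℂ) * Complex.exp (-((z - (rat M p : ℂ)) ^ 2))‖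
      ≤ (1/2)^p * Real.exp (z.im ^ 2) := by
  rw [norm_mul, Complex.norm_real, Real.norm_eq_abs, abs_of_pos (eps_pos hM p)]
  have hre : (-((z - (rat M p : ℂ)) ^ 2)).re ≤ z.im ^ 2 := by
    have h1 : ((z - (rat M p : ℂ)) ^ 2).re
        = (z - (rat M p : ℂ)).re ^ 2 - (z - (rat M p : ℂ)).im ^ 2 := by
      rw [sq, Complex.mul_re]; ring
    have h2 : (z - (rat M p : ℂ)).im = z.im := by simp
    rw [Complex.neg_re, h1, h2]
    nlinarith [sq_nonneg ((z - (rat M p : ℂ)).re)]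
  have hexp : ‖Complex.exp (-((z - (rat M p : ℂ)) ^ 2))‖ ≤ Real.exp (z.im ^ 2) := by
    rw [Complex.norm_exp]
    exact Real.exp_le_exp.2 hre
  calc eps M p * ‖Complex.exp (-((z - (rat M p : ℂ)) ^ 2))‖
      ≤ eps M p * Real.exp (z.im ^ 2) :=
        mul_le_mul_of_nonneg_left hexp (eps_pos hM p).le
    _ ≤ (1/2)^p * Real.exp (z.im ^ 2) :=
        mul_le_mul_of_nonneg_right (eps_le hM p) (Real.exp_pos _).le

lemma differentiable_FC (hM : IsLC M) : Differentiable ℂ (FC M) := by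
  intro z₀
  set R : ℝ := ‖z₀‖ + 1 with hR
  have hRpos : 0 < R := by positivity
  have hmem : z₀ ∈ Metric.ball (0:ℂ) R := by
    simp [R, Metric.mem_ball, dist_zero_right]
  have hbound : ∀ (p : ℕ) (z : ℂ), z ∈ Metric.ball (0:ℂ) R →
      ‖(eps M p : ℂ) * Complex.exp (-((z - (rat M p : ℂ)) ^ 2))‖
        ≤ (1/2)^p * Real.exp (R ^ 2) := by
    intro p z hz
    refine (FC_term_norm hM p z).trans ?_
    have him : z.im ^ 2 ≤ R ^ 2 := by
      have h1 : |z.im| ≤ ‖z‖ := Complex.abs_im_le_norm z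
      have h2 : ‖z‖ < R := by simpa [dist_zero_right] using hz
      nlinarith [abs_nonneg z.im, sq_abs z.im]
    have : Real.exp (z.im ^ 2) ≤ Real.exp (R ^ 2) := Real.exp_le_exp.2 him
    apply mul_le_mul_of_nonneg_left this (by positivity)
  have htu : TendstoUniformlyOn
      (fun (s : Finset ℕ) (z : ℂ) =>
        ∑ p ∈ s, (eps M p : ℂ) * Complex.exp (-((z - (rat M p : ℂ)) ^ 2)))
      (FC M) Filter.atTop (Metric.ball (0:ℂ) R) :=
    tendstoUniformlyOn_tsum (summable_half.mul_right _) hbound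
  have hdiff : DifferentiableOn ℂ (FC M) (Metric.ball (0:ℂ) R) := by
    apply htu.tendstoLocallyUniformlyOn.differentiableOn ?_ Metric.isOpen_ball
    apply Filter.Eventually.of_forall
    intro s
    apply DifferentiableOn.fun_sum
    intro p _
    apply DifferentiableOn.const_mul
    apply Differentiable.differentiableOn
    apply Complex.differentiable_exp.comp
    apply Differentiable.neg
    exact ((differentiable_id.sub_const _).pow 2)
  exact (hdiff.differentiableAt (Metric.isOpen_ball.mem_nhds hmem))

lemma FC_eq_real (hM : IsLC M) (t : ℝ) : FC M t = ((FD M 0 t : ℝ) : ℂ) := by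
  have hmap : ((∑' p, eps M p * iteratedDeriv 0 gauss (t - rat M p) : ℝ) : ℂ)
      = ∑' p, ((eps M p * iteratedDeriv 0 gauss (t - rat M p) : ℝ) : ℂ) := by
    simpa only [Complex.ofRealCLM_apply] using Complex.ofRealCLM.map_tsum (summable_FD hM 0 t)
  rw [FD, FC, hmap]
  congr 1
  funext p
  simp only [iteratedDeriv_zero, gauss, Complex.ofRealCLM_apply, Complex.ofReal_mul,
    Complex.ofReal_exp]
  congr 2
  push_cast
  ring

lemma analyticOnNhd_FD0 (hM : IsLC M) : AnalyticOnNhd ℝ (FD M 0) Set.univ := by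
  intro t _
  have heq : FD M 0 = fun s : ℝ => (FC M s).re := by
    funext s
    rw [FC_eq_real hM s, Complex.ofReal_re]
  rw [heq]
  have h1 : AnalyticAt ℂ (FC M) ((t : ℝ) : ℂ) := (differentiable_FC hM).analyticAt _
  have h2 : AnalyticAt ℝ (FC M) ((t : ℝ) : ℂ) := h1.restrictScalars
  have h3 : AnalyticAt ℝ (fun s : ℝ => FC M s) t :=
    h2.comp (Complex.ofRealCLM.analyticAt t)
  exact (Complex.reCLM.analyticAt _).comp h3

lemma contDiff_top_FD0 (hM : IsLC M) : ContDiff ℝ (⊤ : ℕ∞) (FD M 0) :=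
  (analyticOnNhd_FD0 hM).contDiff

/-! ### Dimension-one transfer -/

lemma pderiv_comp (u : ℝ → ℝ) (hu : Differentiable ℝ u) :
    pderivOp (0 : Fin 1) (fun x => u (x 0)) = fun x => deriv u (x 0) := by
  funext x
  have hproj := (ContinuousLinearMap.proj (R := ℝ) (φ := fun _ : Fin 1 => ℝ) 0).hasFDerivAt (x := x)
  have hcomp : HasFDerivAt (fun y : Fin 1 → ℝ => u (y 0))
      ((deriv u (x 0)) • (ContinuousLinearMap.proj (R := ℝ) (φ := fun _ : Fin 1 => ℝ) 0)) x :=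
    HasDerivAt.comp_hasFDerivAt x ((hu (x 0)).hasDerivAt) hproj
  have hfd : fderiv ℝ (fun y : Fin 1 → ℝ => u (y 0)) x
      = (deriv u (x 0)) • (ContinuousLinearMap.proj (R := ℝ) (φ := fun _ : Fin 1 => ℝ) 0) :=
    hcomp.fderiv
  rw [pderivOp, hfd]
  simp

lemma iter_pderiv_comp (u : ℝ → ℝ) (hu : ∀ n : ℕ, Differentiable ℝ (iteratedDeriv n u)) :
    ∀ n : ℕ, (pderivOp (0 : Fin 1))^[n] (fun x => u (x 0))
      = fun x => iteratedDeriv n u (x 0) := by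
  intro n
  induction n with
  | zero => simp [iteratedDeriv_zero]
  | succ n ih =>
    rw [Function.iterate_succ_apply', ih, show (fun x : Fin 1 → ℝ => iteratedDeriv (n+1) u (x 0))
      = fun x => deriv (iteratedDeriv n u) (x 0) from by
        funext x; rw [← iteratedDeriv_succ]]
    exact pderiv_comp (iteratedDeriv n u) (hu n)

lemma mderiv_one (u : ℝ → ℝ) (hu : ∀ n : ℕ, Differentiable ℝ (iteratedDeriv n u))
    (β : Fin 1 → ℕ) :
    mderiv β (fun x => u (x 0)) = fun x => iteratedDeriv (β 0) u (x 0) := by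
  rw [mderiv, show List.finRange 1 = [0] from rfl]
  simp only [List.foldr_cons, List.foldr_nil]
  exact iter_pderiv_comp u hu (β 0)

lemma mpow_one (x : Fin 1 → ℝ) (α : Fin 1 → ℕ) : mpow x α = x 0 ^ α 0 := by
  rw [mpow]; exact Fin.prod_univ_one _

lemma msize_one (α : Fin 1 → ℕ) : msize α = α 0 := by
  rw [msize]; exact Fin.sum_univ_one _

lemma seqBound_one_iff (K : ℕ → ℝ) (h C : ℝ) (u : ℝ → ℝ)
    (hu : ∀ n : ℕ, Differentiable ℝ (iteratedDeriv n u)) :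
    seqBound K h C (fun x : Fin 1 → ℝ => u (x 0)) ↔
      ∀ (a b : ℕ) (t : ℝ), |t ^ a * iteratedDeriv b u t| ≤ C * h ^ (a+b) * K (a+b) := by
  constructor
  · intro H a b t
    have := H (fun _ => a) (fun _ => b) (fun _ => t)
    rwa [mpow_one, msize_one, msize_one, mderiv_one u hu] at this
  · intro H α β x
    rw [mpow_one, msize_one, msize_one, mderiv_one u hu]
    exact H (α 0) (β 0) (x 0)

end
end GWAux

/-- Theorem `Gelfandweightsequence` (I): for `M, N ∈ LC` satisfying (M2')
and (12L2R), `M ⪯ N` iff `S_{{M}}(ℝ^d) ⊆ S_{{N}}(ℝ^d)` for all `d`; the forward implication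
holds for arbitrary positive sequences and the converse needs only `d = 1`. -/
theorem roumieu_inclusion_characterization_weight_sequences (M N : ℕ → ℝ)
    (hMpos : ∀ p, 0 < M p) (hNpos : ∀ p, 0 < N p) :
    (seqPreceq M N → ∀ d : ℕ, 0 < d → SRoumieuSeq M d ⊆ SRoumieuSeq N d) ∧
    (IsLC M → IsLC N → condM2' M → condM2' N → cond12L2Rseq M → cond12L2Rseq N →
      ((seqPreceq M N ↔ ∀ d : ℕ, 0 < d → SRoumieuSeq M d ⊆ SRoumieuSeq N d) ∧
        (SRoumieuSeq M 1 ⊆ SRoumieuSeq N 1 → seqPreceq M N))) := by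
  have easy : seqPreceq M N → ∀ d : ℕ, 0 < d → SRoumieuSeq M d ⊆ SRoumieuSeq N d := by
    rintro ⟨C₀, hC₀, hle⟩ d _ f ⟨hf1, C, hC, h, hh, hb⟩
    have hC₀pos : (0:ℝ) < C₀ := lt_of_lt_of_le one_pos hC₀
    refine ⟨hf1, C, hC, h * C₀, mul_pos hh hC₀pos, ?_⟩
    intro α β x
    set k := msize α + msize β with hk
    calc |mpow x α * mderiv β f x| ≤ C * h ^ k * M k := hb α β x
      _ ≤ C * (h * C₀) ^ k * N k := by
          rw [mul_pow]
          have h1 : M k ≤ C₀ ^ k * N k := hle k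
          calc C * h ^ k * M k ≤ C * h ^ k * (C₀ ^ k * N k) :=
                mul_le_mul_of_nonneg_left h1
                  (mul_nonneg hC.le (pow_nonneg hh.le k))
            _ = C * (h ^ k * C₀ ^ k) * N k := by ring
  have conv : IsLC M → IsLC N → cond12L2Rseq M →
      (SRoumieuSeq M 1 ⊆ SRoumieuSeq N 1) → seqPreceq M N := by
    intro hM hN h12 hincl
    obtain ⟨B, hB, C, hC, H, hH, h12M⟩ := h12
    set Cm := max C 1 with hCm
    set Hm := max H 1 with hHm
    have hCm1 : (1:ℝ) ≤ Cm := le_max_right _ _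
    have hHm1 : (1:ℝ) ≤ Hm := le_max_right _ _
    have hCm0 : (0:ℝ) ≤ Cm := by linarith
    have hHm0 : (0:ℝ) ≤ Hm := by linarith
    set K := 6 * Cm * Hm with hK
    have hK1 : (1:ℝ) ≤ K := by nlinarith
    set u := GWAux.FD M 0 with husdef
    have hudiff : ∀ n, Differentiable ℝ (iteratedDeriv n u) := by
      intro n
      rw [husdef, GWAux.iteratedDeriv_FD hM n]
      exact fun t => (GWAux.hasDerivAt_FD hM n t).differentiableAt
    have hbound : ∀ (a b : ℕ) (t : ℝ),
        |t ^ a * iteratedDeriv b u t| ≤ (4*B) * K ^ (a+b) * M (a+b) := by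
      intro a b t
      have hrw : iteratedDeriv b u = GWAux.FD M b := by
        rw [husdef]; exact GWAux.iteratedDeriv_FD hM b
      rw [hrw]
      have hMab : (0:ℝ) ≤ M (a+b) := (hMpos (a+b)).le
      have hEnn : (0:ℝ) ≤ B * Cm^(a+b) * Hm^(a+b) * M (a+b) :=
        mul_nonneg (mul_nonneg (mul_nonneg hB.le (pow_nonneg hCm0 _)) (pow_nonneg hHm0 _)) hMab
      have hterm : ∀ p : ℕ,
          |t| ^ a * |GWAux.eps M p * iteratedDeriv b GWAux.gauss (t - GWAux.rat M p)|
          ≤ (1/2)^p * (2*B * K ^ (a+b) * M (a+b)) := by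
        intro p
        have hρ : 0 < GWAux.rat M p := GWAux.rat_pos hM p
        have hε : 0 < GWAux.eps M p := GWAux.eps_pos hM p
        set s := t - GWAux.rat M p with hs
        have ht1 : |t| ≤ GWAux.rat M p + |s| := by
          have ht' : t = GWAux.rat M p + s := by rw [hs]; ring
          rw [ht']
          calc |GWAux.rat M p + s| ≤ |GWAux.rat M p| + |s| := abs_add_le _ _
            _ = GWAux.rat M p + |s| := by rw [abs_of_pos hρ]
        have ht2 : |t| ^ a ≤ 2^a * (GWAux.rat M p ^ a + |s| ^ a) := by
          calc |t| ^ a ≤ (GWAux.rat M p + |s|) ^ a := pow_le_pow_left₀ (abs_nonneg t) ht1 a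
            _ ≤ (2 * max (GWAux.rat M p) |s|) ^ a := by
                apply pow_le_pow_left₀ (by positivity)
                have hm1 := le_max_left (GWAux.rat M p) |s|
                have hm2 := le_max_right (GWAux.rat M p) |s|
                linarith
            _ = 2^a * (max (GWAux.rat M p) |s|) ^ a := by rw [mul_pow]
            _ ≤ 2^a * (GWAux.rat M p ^ a + |s| ^ a) := by
                apply mul_le_mul_of_nonneg_left _ (by positivity)
                rcases max_cases (GWAux.rat M p) |s| with ⟨hmax, _⟩ | ⟨hmax, _⟩ <;> rw [hmax]
                · nlinarith [pow_nonneg (abs_nonneg s) a]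
                · nlinarith [pow_nonneg hρ.le a]
        have hg0 : |iteratedDeriv b GWAux.gauss s| ≤ 3^b * GWAux.phi b := by
          have h := GWAux.gauss_bound b 0 s
          simpa using h
        have hga : |s| ^ a * |iteratedDeriv b GWAux.gauss s| ≤ 3^b * GWAux.phi (a+b) :=
          GWAux.gauss_bound b a s
        have h12b : GWAux.phi b * M a ≤ B * Cm^(a+b) * Hm^(a+b) * M (a+b) := by
          have h0 := h12M b a
          rw [GWAux.phi]
          have e1 : C^b ≤ Cm^(a+b) := by
            calc C^b ≤ Cm^b := pow_le_pow_left₀ hC.le (le_max_left _ _) b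
              _ ≤ Cm^(a+b) := pow_le_pow_right₀ hCm1 (by omega)
          have e2 : H^(b+a) ≤ Hm^(a+b) := by
            calc H^(b+a) ≤ Hm^(b+a) := pow_le_pow_left₀ hH.le (le_max_left _ _) _
              _ = Hm^(a+b) := by rw [Nat.add_comm]
          have e3 : C^b * H^(b+a) ≤ Cm^(a+b) * Hm^(a+b) :=
            mul_le_mul e1 e2 (pow_nonneg hH.le _) (pow_nonneg hCm0 _)
          calc (b:ℝ)^((b:ℝ)/2) * M a ≤ B * C^b * H^(b+a) * M (b+a) := h0
            _ = (C^b * H^(b+a)) * (B * M (b+a)) := by ring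
            _ ≤ (Cm^(a+b) * Hm^(a+b)) * (B * M (b+a)) :=
                mul_le_mul_of_nonneg_right e3 (mul_nonneg hB.le (hMpos (b+a)).le)
            _ = B * Cm^(a+b) * Hm^(a+b) * M (a+b) := by rw [Nat.add_comm b a]; ring
        have h12ab : GWAux.phi (a+b) ≤ B * Cm^(a+b) * Hm^(a+b) * M (a+b) := by
          have h0 := h12M (a+b) 0
          rw [hM.norm0, mul_one, Nat.add_zero] at h0
          rw [GWAux.phi]
          refine h0.trans ?_
          have e1 : C^(a+b) ≤ Cm^(a+b) := pow_le_pow_left₀ hC.le (le_max_left _ _) _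
          have e2 : H^(a+b) ≤ Hm^(a+b) := pow_le_pow_left₀ hH.le (le_max_left _ _) _
          have e3 : C^(a+b) * H^(a+b) ≤ Cm^(a+b) * Hm^(a+b) :=
            mul_le_mul e1 e2 (pow_nonneg hH.le _) (pow_nonneg hCm0 _)
          calc B * C^(a+b) * H^(a+b) * M (a+b) = (C^(a+b) * H^(a+b)) * (B * M (a+b)) := by ring
            _ ≤ (Cm^(a+b) * Hm^(a+b)) * (B * M (a+b)) :=
                mul_le_mul_of_nonneg_right e3 (mul_nonneg hB.le hMab)
            _ = B * Cm^(a+b) * Hm^(a+b) * M (a+b) := by ring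
        have hea := GWAux.eps_mul_pow_le hM p a
        have he0 := GWAux.eps_le hM p
        have expand : |t| ^ a * |GWAux.eps M p * iteratedDeriv b GWAux.gauss s|
            = |t| ^ a * GWAux.eps M p * |iteratedDeriv b GWAux.gauss s| := by
          rw [abs_mul, abs_of_pos hε]; ring
        rw [expand]
        have p1 : (GWAux.eps M p * GWAux.rat M p ^ a) * |iteratedDeriv b GWAux.gauss s|
            ≤ ((1/2)^p * M a) * (3^b * GWAux.phi b) :=
          mul_le_mul hea hg0 (abs_nonneg _) (mul_nonneg (by positivity) (hMpos a).le)
        have p2 : GWAux.eps M p * (|s| ^ a * |iteratedDeriv b GWAux.gauss s|)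
            ≤ (1/2)^p * (3^b * GWAux.phi (a+b)) :=
          mul_le_mul he0 hga (mul_nonneg (pow_nonneg (abs_nonneg s) a) (abs_nonneg _))
            (by positivity)
        have q1 : ((1/2:ℝ)^p * M a) * (3^b * GWAux.phi b)
            ≤ (1/2)^p * 3^b * (B * Cm^(a+b) * Hm^(a+b) * M (a+b)) := by
          calc ((1/2:ℝ)^p * M a) * (3^b * GWAux.phi b)
              = (1/2)^p * 3^b * (GWAux.phi b * M a) := by ring
            _ ≤ (1/2)^p * 3^b * (B * Cm^(a+b) * Hm^(a+b) * M (a+b)) :=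
                mul_le_mul_of_nonneg_left h12b (by positivity)
        have q2 : (1/2:ℝ)^p * (3^b * GWAux.phi (a+b))
            ≤ (1/2)^p * 3^b * (B * Cm^(a+b) * Hm^(a+b) * M (a+b)) := by
          calc (1/2:ℝ)^p * (3^b * GWAux.phi (a+b))
              = (1/2)^p * 3^b * GWAux.phi (a+b) := by ring
            _ ≤ (1/2)^p * 3^b * (B * Cm^(a+b) * Hm^(a+b) * M (a+b)) :=
                mul_le_mul_of_nonneg_left h12ab (by positivity)
        have h23 : (2:ℝ)^a * 3^b ≤ 6^(a+b) := by
          calc (2:ℝ)^a * 3^b ≤ 6^a * 6^b :=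
                mul_le_mul (pow_le_pow_left₀ (by norm_num) (by norm_num) a)
                  (pow_le_pow_left₀ (by norm_num) (by norm_num) b)
                  (by positivity) (by positivity)
            _ = 6^(a+b) := (pow_add 6 a b).symm
        have hKpow : K^(a+b) = 6^(a+b) * Cm^(a+b) * Hm^(a+b) := by
          rw [hK, mul_pow, mul_pow]
        have step1 : |t| ^ a * GWAux.eps M p * |iteratedDeriv b GWAux.gauss s|
            ≤ (2^a * (GWAux.rat M p ^ a + |s| ^ a)) * GWAux.eps M p
              * |iteratedDeriv b GWAux.gauss s| :=
          mul_le_mul_of_nonneg_right (mul_le_mul_of_nonneg_right ht2 hε.le) (abs_nonneg _)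
        have split : (2^a * (GWAux.rat M p ^ a + |s| ^ a)) * GWAux.eps M p
              * |iteratedDeriv b GWAux.gauss s|
            = 2^a * ((GWAux.eps M p * GWAux.rat M p ^ a) * |iteratedDeriv b GWAux.gauss s|
                + GWAux.eps M p * (|s| ^ a * |iteratedDeriv b GWAux.gauss s|)) := by ring
        have sum_le := add_le_add (p1.trans q1) (p2.trans q2)
        calc |t| ^ a * GWAux.eps M p * |iteratedDeriv b GWAux.gauss s|
            ≤ (2^a * (GWAux.rat M p ^ a + |s| ^ a)) * GWAux.eps M p
              * |iteratedDeriv b GWAux.gauss s| := step1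
          _ = 2^a * ((GWAux.eps M p * GWAux.rat M p ^ a) * |iteratedDeriv b GWAux.gauss s|
                + GWAux.eps M p * (|s| ^ a * |iteratedDeriv b GWAux.gauss s|)) := split
          _ ≤ 2^a * ((1/2)^p * 3^b * (B * Cm^(a+b) * Hm^(a+b) * M (a+b))
                + (1/2)^p * 3^b * (B * Cm^(a+b) * Hm^(a+b) * M (a+b))) :=
              mul_le_mul_of_nonneg_left (le_trans (add_le_add (p1.trans q1) (p2.trans q2))
                (le_refl _)) (by positivity)
          _ = (2^a * 3^b) * (2 * (1/2)^p * (B * Cm^(a+b) * Hm^(a+b) * M (a+b))) := by ring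
          _ ≤ 6^(a+b) * (2 * (1/2)^p * (B * Cm^(a+b) * Hm^(a+b) * M (a+b))) :=
              mul_le_mul_of_nonneg_right h23
                (mul_nonneg (by positivity) hEnn)
          _ = (1/2)^p * (2*B * (6^(a+b) * Cm^(a+b) * Hm^(a+b)) * M (a+b)) := by ring
          _ = (1/2)^p * (2*B * K ^ (a+b) * M (a+b)) := by rw [hKpow]
      have habs := GWAux.abs_pow_FD_le hM a b t hterm
      calc |t ^ a * GWAux.FD M b t| = |t|^a * |GWAux.FD M b t| := by rw [abs_mul, abs_pow]
        _ ≤ 2 * (2*B * K^(a+b) * M (a+b)) := habs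
        _ = (4*B) * K^(a+b) * M (a+b) := by ring
    have hFmem : (fun x : Fin 1 → ℝ => u (x 0)) ∈ SRoumieuSeq M 1 := by
      constructor
      · have hcont : ContDiff ℝ (⊤ : ℕ∞) u := by
          rw [husdef]; exact GWAux.contDiff_top_FD0 hM
        have hproj : ContDiff ℝ (⊤ : ℕ∞) (fun x : Fin 1 → ℝ => x 0) :=
          (ContinuousLinearMap.proj (R := ℝ) (φ := fun _ : Fin 1 => ℝ) 0).contDiff
        exact hcont.comp hproj
      · refine ⟨4*B, by linarith, K, by linarith, ?_⟩
        rw [GWAux.seqBound_one_iff M K (4*B) u hudiff]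
        exact hbound
    obtain ⟨-, C₂, hC₂, h₂, hh₂, hb₂⟩ := hincl hFmem
    have hb₂' := (GWAux.seqBound_one_iff N h₂ C₂ u hudiff).1 hb₂
    have key : ∀ p : ℕ, M p ≤ C₂ * (2*h₂)^p * N p := by
      intro p
      have hρ := GWAux.rat_pos hM p
      have hε := GWAux.eps_pos hM p
      have hub := hb₂' p 0 (GWAux.rat M p)
      rw [Nat.add_zero] at hub
      have hu0 : iteratedDeriv 0 u (GWAux.rat M p) = GWAux.FD M 0 (GWAux.rat M p) := by
        rw [iteratedDeriv_zero, husdef]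
      have hge : GWAux.eps M p ≤ GWAux.FD M 0 (GWAux.rat M p) := by
        have hsum := GWAux.summable_FD hM 0 (GWAux.rat M p)
        have hterm_eq : GWAux.eps M p
            * iteratedDeriv 0 GWAux.gauss (GWAux.rat M p - GWAux.rat M p) = GWAux.eps M p := by
          simp [iteratedDeriv_zero, GWAux.gauss]
        rw [GWAux.FD_apply, ← hterm_eq]
        apply Summable.le_tsum hsum p
        intro q _
        have h1 := (GWAux.eps_pos hM q).le
        have h2 := (GWAux.gauss_pos (GWAux.rat M p - GWAux.rat M q)).le
        simp only [iteratedDeriv_zero]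
        exact mul_nonneg h1 h2
      have hlow : (1/2:ℝ)^p * M p ≤ GWAux.rat M p ^ p * GWAux.FD M 0 (GWAux.rat M p) := by
        rw [← GWAux.eps_rat_pow hM p]
        calc GWAux.eps M p * GWAux.rat M p ^ p = GWAux.rat M p ^ p * GWAux.eps M p := by ring
          _ ≤ GWAux.rat M p ^ p * GWAux.FD M 0 (GWAux.rat M p) :=
            mul_le_mul_of_nonneg_left hge (by positivity)
      have hup : GWAux.rat M p ^ p * GWAux.FD M 0 (GWAux.rat M p) ≤ C₂ * h₂^p * N p := by
        rw [hu0] at hub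
        calc GWAux.rat M p ^ p * GWAux.FD M 0 (GWAux.rat M p)
            ≤ |GWAux.rat M p ^ p * GWAux.FD M 0 (GWAux.rat M p)| := le_abs_self _
          _ ≤ C₂ * h₂^p * N p := hub
      have hkey : (1/2:ℝ)^p * M p ≤ C₂ * h₂^p * N p := hlow.trans hup
      calc M p = 2^p * ((1/2:ℝ)^p * M p) := by
            rw [← mul_assoc, ← mul_pow]; norm_num
        _ ≤ 2^p * (C₂ * h₂^p * N p) := mul_le_mul_of_nonneg_left hkey (by positivity)
        _ = C₂ * (2*h₂)^p * N p := by rw [mul_pow]; ring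
    refine ⟨max C₂ 1 * max (2*h₂) 1, ?_, ?_⟩
    · have h1 : (1:ℝ) ≤ max C₂ 1 := le_max_right _ _
      have h2 : (1:ℝ) ≤ max (2*h₂) 1 := le_max_right _ _
      nlinarith
    · intro p
      rcases Nat.eq_zero_or_pos p with rfl | hp
      · simp [hM.norm0, hN.norm0]
      · have e1 : C₂ ≤ (max C₂ 1)^p := by
          calc C₂ ≤ max C₂ 1 := le_max_left _ _
            _ ≤ (max C₂ 1)^p := le_self_pow₀ (le_max_right _ _) (by omega)
        have e2 : (2*h₂)^p ≤ (max (2*h₂) 1)^p :=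
          pow_le_pow_left₀ (by positivity) (le_max_left _ _) p
        calc M p ≤ C₂ * (2*h₂)^p * N p := key p
          _ ≤ (max C₂ 1)^p * (max (2*h₂) 1)^p * N p := by
              apply mul_le_mul_of_nonneg_right _ (hNpos p).le
              exact mul_le_mul e1 e2 (by positivity) (by positivity)
          _ = (max C₂ 1 * max (2*h₂) 1)^p * N p := by rw [mul_pow]
  refine ⟨easy, ?_⟩
  intro hM hN _ _ h12M _
  exact ⟨⟨fun hp => easy hp, fun hall => conv hM hN h12M (hall 1 one_pos)⟩, conv hM hN h12M⟩
end
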